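/- arXiv:1205.6402 — 12 statements merged into one kernel-verified Lean document; each statement's English description precedes it below -/
import Mathlib

section
/- Generalized weakening for CPL natural deduction: if Γ ⊆_w Γ' and Γ ⊢ A[w] in the CPL natural deduction system, then Γ' ⊢ A[w]. -/
/-- Propositions of constructive provability logic over a type `Atom` of atomic
propositions: atoms `Q`, falsehood `⊥`, implication `A ⊃ B`, possibility `◇A`,
and necessity `□A`. -/
inductive Form (Atom : Type) : Type where
  | atom : Atom → Form Atom
  | bot  : Form Atom
  | imp  : Form Atom → Form Atom → Form Atom
  | dia  : Form Atom → Form Atom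
  | box  : Form Atom → Form Atom
  deriving DecidableEq

/-- `¬A` abbreviates `A ⊃ ⊥`. -/
def Form.neg {Atom : Type} (A : Form Atom) : Form Atom := Form.imp A Form.bot

/-- A context is a finite set of judgments `A[w]` pairing a proposition with a world. -/
abbrev Ctx (Atom W : Type) [DecidableEq Atom] [DecidableEq W] := Finset (Form Atom × W)

/-- CPL natural deduction with conclusions at a fixed world `w`, parameterized by
an oracle `O` giving provability at the worlds accessible from `w` (which, by
converse well-foundedness of the accessibility relation, is defined before
provability at `w`).  The rules are: hyp, ⊥E, ⊃I, ⊃E, ◇I, □I, ◇E, □E. -/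
inductive NDInner {Atom W : Type} [DecidableEq Atom] [DecidableEq W]
    (acc : W → W → Prop) (w : W)
    (O : ∀ w', acc w w' → Ctx Atom W → Form Atom → Prop) :
    Ctx Atom W → Form Atom → Prop where
  | hyp (Γ : Ctx Atom W) (A : Form Atom) :
      NDInner acc w O (insert (A, w) Γ) A
  | botE (Γ : Ctx Atom W) (C : Form Atom) :
      NDInner acc w O Γ .bot → NDInner acc w O Γ C
  | impI (Γ : Ctx Atom W) (A B : Form Atom) :
      NDInner acc w O (insert (A, w) Γ) B → NDInner acc w O Γ (.imp A B)
  | impE (Γ : Ctx Atom W) (A B : Form Atom) :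
      NDInner acc w O Γ (.imp A B) → NDInner acc w O Γ A → NDInner acc w O Γ B
  | diaI (Γ : Ctx Atom W) (A : Form Atom) (w' : W) (h : acc w w') :
      O w' h Γ A → NDInner acc w O Γ (.dia A)
  | boxI (Γ : Ctx Atom W) (A : Form Atom) :
      (∀ w' (h : acc w w'), O w' h Γ A) → NDInner acc w O Γ (.box A)
  | diaE (Γ : Ctx Atom W) (A C : Form Atom) :
      NDInner acc w O Γ (.dia A) →
      (∀ w' (h : acc w w'), O w' h Γ A → NDInner acc w O Γ C) →
      NDInner acc w O Γ C
  | boxE (Γ : Ctx Atom W) (A C : Form Atom) :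
      NDInner acc w O Γ (.box A) →
      ((∀ w' (h : acc w w'), O w' h Γ A) → NDInner acc w O Γ C) →
      NDInner acc w O Γ C

/-- The natural deduction judgment `Γ ⊢ A[w]` of tethered constructive
provability logic CPL, defined one world at a time by well-founded recursion
on the converse well-founded accessibility relation `acc` (`≺`). -/
def NDCPL {Atom W : Type} [DecidableEq Atom] [DecidableEq W]
    (acc : W → W → Prop) (hwf : WellFounded (Function.swap acc)) :
    W → Ctx Atom W → Form Atom → Prop :=
  hwf.fix (C := fun _ => Ctx Atom W → Form Atom → Prop)
    (fun w rec => NDInner acc w (fun w' h => rec w' h))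

/-- `Γ ⊆_w Γ'`: judgments at worlds reflexively-transitively accessible from `w`
may only be added, and judgments at worlds transitively accessible from `w`
may not change (judgments at other worlds are unconstrained). -/
def SubCtx {Atom W : Type} [DecidableEq Atom] [DecidableEq W]
    (acc : W → W → Prop) (w : W) (Γ Γ' : Ctx Atom W) : Prop :=
  (∀ (A : Form Atom) (w' : W), Relation.ReflTransGen acc w w' →
      (A, w') ∈ Γ → (A, w') ∈ Γ') ∧
  (∀ (A : Form Atom) (w' : W), Relation.TransGen acc w w' →
      (A, w') ∈ Γ' → (A, w') ∈ Γ)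


lemma NDCPL_eq {Atom W : Type} [DecidableEq Atom] [DecidableEq W]
    (acc : W → W → Prop) (hwf : WellFounded (Function.swap acc)) (w : W) :
    NDCPL (Atom := Atom) acc hwf w =
    NDInner acc w (fun w' _ => NDCPL acc hwf w') :=
  hwf.fix_eq _ w

lemma subctx_acc {Atom W : Type} [DecidableEq Atom] [DecidableEq W]
    (acc : W → W → Prop) (w w' : W) (h : acc w w') {Γ Γ' : Ctx Atom W}
    (hsub : SubCtx acc w Γ Γ') :
    SubCtx acc w' Γ Γ' ∧ SubCtx acc w' Γ' Γ := by
  have hmem : ∀ (B : Form Atom) (w'' : W), Relation.ReflTransGen acc w' w'' →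
      ((B, w'') ∈ Γ ↔ (B, w'') ∈ Γ') := by
    intro B w'' hr
    have ht : Relation.TransGen acc w w'' := Relation.TransGen.head' h hr
    exact ⟨fun hm => hsub.1 B w'' ht.to_reflTransGen hm, fun hm => hsub.2 B w'' ht hm⟩
  exact ⟨⟨fun B w'' hr hm => (hmem B w'' hr).1 hm,
          fun B w'' ht hm => (hmem B w'' ht.to_reflTransGen).2 hm⟩,
         ⟨fun B w'' hr hm => (hmem B w'' hr).2 hm,
          fun B w'' ht hm => (hmem B w'' ht.to_reflTransGen).1 hm⟩⟩

lemma subctx_insert {Atom W : Type} [DecidableEq Atom] [DecidableEq W]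
    (acc : W → W → Prop) (w : W) (A : Form Atom)
    {Γ Γ' : Ctx Atom W} (hsub : SubCtx acc w Γ Γ') :
    SubCtx acc w (insert (A, w) Γ) (insert (A, w) Γ') := by
  constructor
  · intro B w'' hr hm
    rcases Finset.mem_insert.mp hm with h | h
    · exact Finset.mem_insert.mpr (Or.inl h)
    · exact Finset.mem_insert.mpr (Or.inr (hsub.1 B w'' hr h))
  · intro B w'' ht hm
    rcases Finset.mem_insert.mp hm with h | h
    · exact Finset.mem_insert.mpr (Or.inl h)
    · exact Finset.mem_insert.mpr (Or.inr (hsub.2 B w'' ht h))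

/-- Generalized weakening for CPL natural deduction: if `Γ ⊆_w Γ'` and
`Γ ⊢ A[w]`, then `Γ' ⊢ A[w]`. -/
theorem cpl_nd_weakening {Atom W : Type} [DecidableEq Atom] [DecidableEq W]
    (acc : W → W → Prop) (hwf : WellFounded (Function.swap acc))
    (w : W) (Γ Γ' : Ctx Atom W) (A : Form Atom)
    (hsub : SubCtx acc w Γ Γ') (h : NDCPL acc hwf w Γ A) :
    NDCPL acc hwf w Γ' A := by
  induction w using hwf.induction generalizing Γ Γ' A with
  | _ w IH =>
  rw [NDCPL_eq] at h ⊢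
  induction h generalizing Γ' with
  | hyp Γ A =>
      have hm : (A, w) ∈ Γ' := hsub.1 A w Relation.ReflTransGen.refl
        (Finset.mem_insert_self _ _)
      rw [← Finset.insert_eq_self.mpr hm]
      exact NDInner.hyp _ _
  | botE Γ C _ ih => exact NDInner.botE _ _ (ih Γ' hsub)
  | impI Γ A B _ ih =>
      exact NDInner.impI _ _ _ (ih (insert (A, w) Γ') (subctx_insert acc w A hsub))
  | impE Γ A B _ _ ih1 ih2 =>
      exact NDInner.impE _ _ _ (ih1 Γ' hsub) (ih2 Γ' hsub)
  | diaI Γ A w' hacc hO =>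
      exact NDInner.diaI _ _ w' hacc
        (IH w' hacc Γ Γ' A (subctx_acc acc w w' hacc hsub).1 hO)
  | boxI Γ A hO =>
      exact NDInner.boxI _ _ (fun w' hacc =>
        IH w' hacc Γ Γ' A (subctx_acc acc w w' hacc hsub).1 (hO w' hacc))
  | diaE Γ A C _ _ ihd ihk =>
      exact NDInner.diaE _ A C (ihd Γ' hsub) (fun w' hacc hO =>
        ihk w' hacc (IH w' hacc Γ' Γ A (subctx_acc acc w w' hacc hsub).2 hO) Γ' hsub)
  | boxE Γ A C _ _ ihb ihk =>
      exact NDInner.boxE _ A C (ihb Γ' hsub) (fun hall =>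
        ihk (fun w' hacc =>
          IH w' hacc Γ' Γ A (subctx_acc acc w w' hacc hsub).2 (hall w' hacc)) Γ' hsub)
end

section
/- Identity admissibility (hypothesis principle) for the CPL sequent calculus: for every proposition A, if A[w] ∈ Γ then Γ ⟹ A[w] in the CPL sequent calculus. -/
/-- CPL sequent calculus with sequents at a fixed world `w`, parameterized by an
oracle `O` giving derivability of sequents at the worlds accessible from `w`
(which, by converse well-foundedness of the accessibility relation, is defined
before derivability at `w`).  The rules are: init, ⊥L, ⊃R, ⊃L, ◇R, □R, ◇L, □L. -/
inductive SeqInner {Atom W : Type} [DecidableEq Atom] [DecidableEq W]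
    (acc : W → W → Prop) (w : W)
    (O : ∀ w', acc w w' → Ctx Atom W → Form Atom → Prop) :
    Ctx Atom W → Form Atom → Prop where
  | init (Γ : Ctx Atom W) (Q : Atom) :
      SeqInner acc w O (insert (.atom Q, w) Γ) (.atom Q)
  | botL (Γ : Ctx Atom W) (C : Form Atom) :
      (Form.bot, w) ∈ Γ → SeqInner acc w O Γ C
  | impR (Γ : Ctx Atom W) (A B : Form Atom) :
      SeqInner acc w O (insert (A, w) Γ) B → SeqInner acc w O Γ (.imp A B)
  | impL (Γ : Ctx Atom W) (A B C : Form Atom) :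
      (Form.imp A B, w) ∈ Γ → SeqInner acc w O Γ A →
      SeqInner acc w O (insert (B, w) Γ) C → SeqInner acc w O Γ C
  | diaR (Γ : Ctx Atom W) (A : Form Atom) (w' : W) (h : acc w w') :
      O w' h Γ A → SeqInner acc w O Γ (.dia A)
  | boxR (Γ : Ctx Atom W) (A : Form Atom) :
      (∀ w' (h : acc w w'), O w' h Γ A) → SeqInner acc w O Γ (.box A)
  | diaL (Γ : Ctx Atom W) (A C : Form Atom) :
      (Form.dia A, w) ∈ Γ →
      (∀ w' (h : acc w w'), O w' h Γ A → SeqInner acc w O Γ C) →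
      SeqInner acc w O Γ C
  | boxL (Γ : Ctx Atom W) (A C : Form Atom) :
      (Form.box A, w) ∈ Γ →
      ((∀ w' (h : acc w w'), O w' h Γ A) → SeqInner acc w O Γ C) →
      SeqInner acc w O Γ C

/-- The sequent calculus judgment `Γ ⟹ A[w]` of tethered constructive
provability logic CPL, defined one world at a time by well-founded recursion
on the converse well-founded accessibility relation `acc` (`≺`). -/
def SeqCPL {Atom W : Type} [DecidableEq Atom] [DecidableEq W]
    (acc : W → W → Prop) (hwf : WellFounded (Function.swap acc)) :
    W → Ctx Atom W → Form Atom → Prop :=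
  hwf.fix (C := fun _ => Ctx Atom W → Form Atom → Prop)
    (fun w rec => SeqInner acc w (fun w' h => rec w' h))


lemma SeqCPL_unfold {Atom W : Type} [DecidableEq Atom] [DecidableEq W]
    (acc : W → W → Prop) (hwf : WellFounded (Function.swap acc)) (w : W) :
    SeqCPL acc hwf w =
      SeqInner (Atom := Atom) acc w (fun w' _ => SeqCPL acc hwf w') := by
  show hwf.fix _ w = _
  rw [WellFounded.fix_eq]
  rfl

/-- Identity admissibility (hypothesis principle) for the CPL sequent calculus:
for every proposition `A`, if `A[w] ∈ Γ` then `Γ ⟹ A[w]`. -/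
theorem cpl_seq_identity {Atom W : Type} [DecidableEq Atom] [DecidableEq W]
    (acc : W → W → Prop) (hwf : WellFounded (Function.swap acc))
    (w : W) (Γ : Ctx Atom W) (A : Form Atom)
    (hmem : (A, w) ∈ Γ) :
    SeqCPL acc hwf w Γ A := by
  induction A generalizing Γ with
  | atom Q =>
    rw [SeqCPL_unfold]
    have h : insert (Form.atom Q, w) Γ = Γ := Finset.insert_eq_self.mpr hmem
    exact h ▸ SeqInner.init Γ Q
  | bot =>
    rw [SeqCPL_unfold]
    exact SeqInner.botL Γ _ hmem
  | imp A B ihA ihB =>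
    rw [SeqCPL_unfold]
    apply SeqInner.impR
    apply SeqInner.impL _ A B B (Finset.mem_insert_of_mem hmem)
    · rw [← SeqCPL_unfold]; exact ihA _ (Finset.mem_insert_self _ _)
    · rw [← SeqCPL_unfold]; exact ihB _ (Finset.mem_insert_self _ _)
  | dia A _ =>
    rw [SeqCPL_unfold]
    exact SeqInner.diaL Γ A _ hmem (fun w' h hO => SeqInner.diaR Γ A w' h hO)
  | box A _ =>
    rw [SeqCPL_unfold]
    exact SeqInner.boxL Γ A _ hmem (fun hall => SeqInner.boxR Γ A hall)
end

section
/- Generalized weakening for the CPL sequent calculus: if Γ ⊆_w Γ' and Γ ⟹ A[w] in the CPL sequent calculus, then Γ' ⟹ A[w]. -/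
lemma subCtx_insert {Atom W : Type} [DecidableEq Atom] [DecidableEq W]
    {acc : W → W → Prop} {w : W} {Γ Γ' : Ctx Atom W} (hsub : SubCtx acc w Γ Γ')
    (A : Form Atom) :
    SubCtx acc w (insert (A, w) Γ) (insert (A, w) Γ') := by
  obtain ⟨h1, h2⟩ := hsub
  constructor
  · intro B w' hr hm
    rcases Finset.mem_insert.mp hm with h | h
    · exact Finset.mem_insert.mpr (Or.inl h)
    · exact Finset.mem_insert.mpr (Or.inr (h1 B w' hr h))
  · intro B w' ht hm
    rcases Finset.mem_insert.mp hm with h | h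
    · exact Finset.mem_insert.mpr (Or.inl h)
    · exact Finset.mem_insert.mpr (Or.inr (h2 B w' ht h))

lemma subCtx_step {Atom W : Type} [DecidableEq Atom] [DecidableEq W]
    {acc : W → W → Prop} {w w' : W} {Γ Γ' : Ctx Atom W}
    (ha : acc w w') (hsub : SubCtx acc w Γ Γ') : SubCtx acc w' Γ Γ' := by
  obtain ⟨h1, h2⟩ := hsub
  exact ⟨fun B w'' hr hm => h1 B w'' (Relation.ReflTransGen.head ha hr) hm,
         fun B w'' ht hm => h2 B w'' (Relation.TransGen.head ha ht) hm⟩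

lemma subCtx_step_rev {Atom W : Type} [DecidableEq Atom] [DecidableEq W]
    {acc : W → W → Prop} {w w' : W} {Γ Γ' : Ctx Atom W}
    (ha : acc w w') (hsub : SubCtx acc w Γ Γ') : SubCtx acc w' Γ' Γ := by
  obtain ⟨h1, h2⟩ := hsub
  constructor
  · intro B w'' hr hm
    exact h2 B w'' (Relation.TransGen.head' ha hr) hm
  · intro B w'' ht hm
    exact h1 B w'' (Relation.TransGen.head ha ht).to_reflTransGen hm

lemma cpl_seq_weakening_aux {Atom W : Type} [DecidableEq Atom] [DecidableEq W]
    (acc : W → W → Prop) (hwf : WellFounded (Function.swap acc)) (w : W) :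
    ∀ (Γ Γ' : Ctx Atom W) (A : Form Atom),
      SubCtx acc w Γ Γ' → SeqCPL acc hwf w Γ A → SeqCPL acc hwf w Γ' A := by
  induction w using hwf.induction with
  | _ w IH =>
  intro Γ Γ' A hsub h
  rw [SeqCPL, hwf.fix_eq] at h ⊢
  induction h generalizing Γ' with
  | init Γ Q =>
    have hmem : (Form.atom Q, w) ∈ Γ' :=
      hsub.1 _ _ Relation.ReflTransGen.refl (Finset.mem_insert_self _ _)
    rw [← Finset.insert_eq_self.mpr hmem]
    exact SeqInner.init _ _
  | botL Γ C hm =>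
    exact SeqInner.botL _ _ (hsub.1 _ _ Relation.ReflTransGen.refl hm)
  | impR Γ A B _ ih =>
    exact SeqInner.impR _ _ _ (ih _ (subCtx_insert hsub A))
  | impL Γ A B C hm _ _ ihA ihC =>
    exact SeqInner.impL _ _ _ _ (hsub.1 _ _ Relation.ReflTransGen.refl hm)
      (ihA _ hsub) (ihC _ (subCtx_insert hsub B))
  | diaR Γ A w' ha hO =>
    exact SeqInner.diaR _ _ _ ha (IH w' ha _ _ _ (subCtx_step ha hsub) hO)
  | boxR Γ A hO =>
    exact SeqInner.boxR _ _ (fun w' ha => IH w' ha _ _ _ (subCtx_step ha hsub) (hO w' ha))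
  | diaL Γ A C hm _ ih =>
    refine SeqInner.diaL _ _ _ (hsub.1 _ _ Relation.ReflTransGen.refl hm) ?_
    intro w' ha hO
    exact ih w' ha (IH w' ha _ _ _ (subCtx_step_rev ha hsub) hO) _ hsub
  | boxL Γ A C hm _ ih =>
    refine SeqInner.boxL _ _ _ (hsub.1 _ _ Relation.ReflTransGen.refl hm) ?_
    intro hO
    exact ih (fun w' ha => IH w' ha _ _ _ (subCtx_step_rev ha hsub) (hO w' ha)) _ hsub

/-- Generalized weakening for the CPL sequent calculus: if `Γ ⊆_w Γ'` and
`Γ ⟹ A[w]`, then `Γ' ⟹ A[w]`. -/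
theorem cpl_seq_weakening {Atom W : Type} [DecidableEq Atom] [DecidableEq W]
    (acc : W → W → Prop) (hwf : WellFounded (Function.swap acc))
    (w : W) (Γ Γ' : Ctx Atom W) (A : Form Atom)
    (hsub : SubCtx acc w Γ Γ') (h : SeqCPL acc hwf w Γ A) :
    SeqCPL acc hwf w Γ' A := by
  exact cpl_seq_weakening_aux acc hwf w Γ Γ' A hsub h
end

section
/- Cut admissibility for the CPL sequent calculus: if Γ ⟹ A[w] and Γ, A[w] ⟹ C[w] in the CPL sequent calculus, then Γ ⟹ C[w]. -/
set_option linter.unusedSectionVars false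

open Relation Finset

namespace CPLCut

variable {Atom W : Type} [DecidableEq Atom] [DecidableEq W]
  (acc : W → W → Prop) (hwf : WellFounded (Function.swap acc))

/-- Inner sequent with the CPL oracle. -/
abbrev SIn (v : W) : Ctx Atom W → Form Atom → Prop :=
  SeqInner acc v (fun w' _ => SeqCPL acc hwf w')

theorem unfoldCPL (v : W) (Γ : Ctx Atom W) (C : Form Atom) :
    SeqCPL acc hwf v Γ C ↔ SIn acc hwf v Γ C := by
  show (SeqCPL acc hwf) v Γ C ↔ _
  unfold SeqCPL
  rw [hwf.fix_eq]
  exact Iff.rfl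

include hwf in
theorem noreach {v w' : W} (h : acc v w') : ¬ ReflTransGen acc w' v := fun hr =>
  ((WellFounded.transGen hwf).isIrrefl).irrefl v (Relation.transGen_swap.mpr (Relation.TransGen.head' h hr))

/-- init from membership. -/
theorem SIn.init' {v : W} {Γ : Ctx Atom W} {Q : Atom}
    (h : (Form.atom Q, v) ∈ Γ) : SIn acc hwf v Γ (.atom Q) := by
  have := SeqInner.init (Atom := Atom) (acc := acc) (w := v)
    (O := fun w' _ => SeqCPL acc hwf w') Γ Q
  rwa [Finset.insert_eq_self.mpr h] at this

/-- Judgments at a world `u` not reachable from `v` are inert at `v`: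
they can be added (weakening) and removed (strengthening). -/
theorem inert : ∀ v : W, ∀ u : W, ¬ ReflTransGen acc v u → ∀ (A : Form Atom),
    (∀ (Γ : Ctx Atom W) (C : Form Atom),
      SeqCPL acc hwf v Γ C → SeqCPL acc hwf v (insert (A, u) Γ) C) ∧
    (∀ (Γ : Ctx Atom W) (C : Form Atom),
      SeqCPL acc hwf v (insert (A, u) Γ) C → SeqCPL acc hwf v Γ C) := by
  intro v
  induction v using hwf.induction with
  | _ v IH =>
  intro u hnr A
  have hvu : v ≠ u := fun h => hnr (h ▸ ReflTransGen.refl)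
  have IH' : ∀ w' (h : acc v w'),
      (∀ Γ C, SeqCPL acc hwf w' Γ C → SeqCPL acc hwf w' (insert (A, u) Γ) C) ∧
      (∀ Γ C, SeqCPL acc hwf w' (insert (A, u) Γ) C → SeqCPL acc hwf w' Γ C) :=
    fun w' h => IH w' h u (fun hr => hnr (ReflTransGen.head h hr)) A
  constructor
  · -- weakening
    intro Γ C h
    rw [unfoldCPL] at h ⊢
    induction h with
    | init Γ' Q =>
        rw [Finset.insert_comm]
        exact SeqInner.init _ _
    | botL Γ' C' hm => exact SeqInner.botL _ _ (Finset.mem_insert_of_mem hm)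
    | impR Γ' A' B' _ ih =>
        exact SeqInner.impR _ _ _ (by rwa [Finset.insert_comm])
    | impL Γ' A' B' C' hm _ _ ih1 ih2 =>
        exact SeqInner.impL _ _ _ _ (Finset.mem_insert_of_mem hm) ih1
          (by rwa [Finset.insert_comm])
    | diaR Γ' A' w' hacc o =>
        exact SeqInner.diaR _ _ w' hacc ((IH' w' hacc).1 _ _ o)
    | boxR Γ' A' o =>
        exact SeqInner.boxR _ _ (fun w' h => (IH' w' h).1 _ _ (o w' h))
    | diaL Γ' A' C' hm _ ih =>
        exact SeqInner.diaL _ _ _ (Finset.mem_insert_of_mem hm)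
          (fun w' h p => ih w' h ((IH' w' h).2 _ _ p))
    | boxL Γ' A' C' hm _ ih =>
        exact SeqInner.boxL _ _ _ (Finset.mem_insert_of_mem hm)
          (fun hp => ih (fun w' h => (IH' w' h).2 _ _ (hp w' h)))
  · -- strengthening
    intro Γ C h
    rw [unfoldCPL] at h ⊢
    have key : ∀ (Δ : Ctx Atom W) (C' : Form Atom), SIn acc hwf v Δ C' → ∀ Γ', Δ = insert (A, u) Γ' →
        SIn acc hwf v Γ' C' := by
      intro Δ C' h
      induction h with
      | init Γ' Q =>
          intro Γ'' hEq
          have hm : (Form.atom Q, v) ∈ insert (A, u) Γ'' := by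
            rw [← hEq]; exact Finset.mem_insert_self _ _
          rcases Finset.mem_insert.mp hm with h1 | h1
          · exact absurd (congrArg Prod.snd h1) hvu
          · exact SIn.init' acc hwf h1
      | botL Γ' C'' hm =>
          intro Γ'' hEq
          rw [hEq] at hm
          rcases Finset.mem_insert.mp hm with h1 | h1
          · exact absurd (congrArg Prod.snd h1) hvu
          · exact SeqInner.botL _ _ h1
      | impR Γ' A' B' _ ih =>
          intro Γ'' hEq
          exact SeqInner.impR _ _ _ (ih (insert (A', v) Γ'') (by rw [hEq, Finset.insert_comm]))
      | impL Γ' A' B' C'' hm _ _ ih1 ih2 =>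
          intro Γ'' hEq
          rw [hEq] at hm
          rcases Finset.mem_insert.mp hm with h1 | h1
          · exact absurd (congrArg Prod.snd h1) hvu
          · exact SeqInner.impL _ _ _ _ h1 (ih1 Γ'' hEq)
              (ih2 (insert (B', v) Γ'') (by rw [hEq, Finset.insert_comm]))
      | diaR Γ' A' w' hacc o =>
          intro Γ'' hEq
          rw [hEq] at o
          exact SeqInner.diaR _ _ w' hacc ((IH' w' hacc).2 _ _ o)
      | boxR Γ' A' o =>
          intro Γ'' hEq
          rw [hEq] at o
          exact SeqInner.boxR _ _ (fun w' h => (IH' w' h).2 _ _ (o w' h))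
      | diaL Γ' A' C'' hm _ ih =>
          intro Γ'' hEq
          rw [hEq] at hm
          rcases Finset.mem_insert.mp hm with h1 | h1
          · exact absurd (congrArg Prod.snd h1) hvu
          · refine SeqInner.diaL _ _ _ h1 (fun w' h p => ih w' h ?_ Γ'' hEq)
            rw [hEq]
            exact (IH' w' h).1 _ _ p
      | boxL Γ' A' C'' hm _ ih =>
          intro Γ'' hEq
          rw [hEq] at hm
          rcases Finset.mem_insert.mp hm with h1 | h1
          · exact absurd (congrArg Prod.snd h1) hvu
          · refine SeqInner.boxL _ _ _ h1 (fun hp => ih ?_ Γ'' hEq)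
            rw [hEq]
            exact fun w' h => (IH' w' h).1 _ _ (hp w' h)
    exact key _ _ h Γ rfl




/-- Height-indexed variant of the CPL sequent calculus at a fixed world `v`,
with oracle premises condensed to propositions so that heights exist. -/
inductive SN {Atom W : Type} [DecidableEq Atom] [DecidableEq W]
    (acc : W → W → Prop) (hwf : WellFounded (Function.swap acc)) (v : W) :
    ℕ → Ctx Atom W → Form Atom → Prop where
  | init {n : ℕ} {Γ : Ctx Atom W} {Q : Atom} :
      (Form.atom Q, v) ∈ Γ → SN acc hwf v n Γ (.atom Q)
  | botL {n : ℕ} {Γ : Ctx Atom W} {C : Form Atom} :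
      (Form.bot, v) ∈ Γ → SN acc hwf v n Γ C
  | impR {n : ℕ} {Γ : Ctx Atom W} {A B : Form Atom} :
      SN acc hwf v n (insert (A, v) Γ) B → SN acc hwf v (n+1) Γ (.imp A B)
  | impL {n : ℕ} {Γ : Ctx Atom W} {A B C : Form Atom} :
      (Form.imp A B, v) ∈ Γ → SN acc hwf v n Γ A →
      SN acc hwf v n (insert (B, v) Γ) C → SN acc hwf v (n+1) Γ C
  | diaR {n : ℕ} {Γ : Ctx Atom W} {A : Form Atom} {w' : W} :
      acc v w' → SeqCPL acc hwf w' Γ A → SN acc hwf v n Γ (.dia A)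
  | boxR {n : ℕ} {Γ : Ctx Atom W} {A : Form Atom} :
      (∀ w', acc v w' → SeqCPL acc hwf w' Γ A) → SN acc hwf v n Γ (.box A)
  | diaL {n : ℕ} {Γ : Ctx Atom W} {A C : Form Atom} :
      (Form.dia A, v) ∈ Γ →
      ((∃ w', acc v w' ∧ SeqCPL acc hwf w' Γ A) → SN acc hwf v n Γ C) →
      SN acc hwf v (n+1) Γ C
  | boxL {n : ℕ} {Γ : Ctx Atom W} {A C : Form Atom} :
      (Form.box A, v) ∈ Γ →
      ((∀ w', acc v w' → SeqCPL acc hwf w' Γ A) → SN acc hwf v n Γ C) →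
      SN acc hwf v (n+1) Γ C

variable {Atom W : Type} [DecidableEq Atom] [DecidableEq W]
  {acc : W → W → Prop} {hwf : WellFounded (Function.swap acc)} {v : W}

theorem SN.mono {n m : ℕ} {Γ : Ctx Atom W} {C : Form Atom}
    (h : SN acc hwf v n Γ C) (hnm : n ≤ m) : SN acc hwf v m Γ C := by
  induction h generalizing m with
  | init hm => exact SN.init hm
  | botL hm => exact SN.botL hm
  | impR _ ih =>
      obtain ⟨m', rfl⟩ : ∃ m', m = m' + 1 := ⟨m - 1, by omega⟩
      exact SN.impR (ih (by omega))
  | impL hm _ _ ih1 ih2 =>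
      obtain ⟨m', rfl⟩ : ∃ m', m = m' + 1 := ⟨m - 1, by omega⟩
      exact SN.impL hm (ih1 (by omega)) (ih2 (by omega))
  | diaR hacc o => exact SN.diaR hacc o
  | boxR o => exact SN.boxR o
  | diaL hm _ ih =>
      obtain ⟨m', rfl⟩ : ∃ m', m = m' + 1 := ⟨m - 1, by omega⟩
      exact SN.diaL hm (fun e => ih e (by omega))
  | boxL hm _ ih =>
      obtain ⟨m', rfl⟩ : ∃ m', m = m' + 1 := ⟨m - 1, by omega⟩
      exact SN.boxL hm (fun e => ih e (by omega))

theorem SN.toSIn {n : ℕ} {Γ : Ctx Atom W} {C : Form Atom}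
    (h : SN acc hwf v n Γ C) :
    SeqInner acc v (fun w' _ => SeqCPL acc hwf w') Γ C := by
  induction h with
  | init hm =>
      rw [← Finset.insert_eq_self.mpr hm]
      exact SeqInner.init _ _
  | botL hm => exact SeqInner.botL _ _ hm
  | impR _ ih => exact SeqInner.impR _ _ _ ih
  | impL hm _ _ ih1 ih2 => exact SeqInner.impL _ _ _ _ hm ih1 ih2
  | diaR hacc o => exact SeqInner.diaR _ _ _ hacc o
  | boxR o => exact SeqInner.boxR _ _ (fun w' h => o w' h)
  | diaL hm _ ih => exact SeqInner.diaL _ _ _ hm (fun w' h p => ih ⟨w', h, p⟩)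
  | boxL hm _ ih => exact SeqInner.boxL _ _ _ hm (fun hp => ih (fun w' h => hp w' h))

theorem SIn.toSN {Γ : Ctx Atom W} {C : Form Atom}
    (h : SeqInner acc v (fun w' _ => SeqCPL acc hwf w') Γ C) :
    ∃ n, SN acc hwf v n Γ C := by
  induction h with
  | init Γ' Q => exact ⟨0, SN.init (Finset.mem_insert_self _ _)⟩
  | botL Γ' C' hm => exact ⟨0, SN.botL hm⟩
  | impR Γ' A' B' _ ih =>
      obtain ⟨n, hn⟩ := ih
      exact ⟨n + 1, SN.impR hn⟩
  | impL Γ' A' B' C' hm _ _ ih1 ih2 =>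
      obtain ⟨n1, hn1⟩ := ih1
      obtain ⟨n2, hn2⟩ := ih2
      exact ⟨max n1 n2 + 1, SN.impL hm (hn1.mono (le_max_left _ _)) (hn2.mono (le_max_right _ _))⟩
  | diaR Γ' A' w' hacc o => exact ⟨0, SN.diaR hacc o⟩
  | boxR Γ' A' o => exact ⟨0, SN.boxR (fun w' h => o w' h)⟩
  | diaL Γ' A' C' hm _ ih =>
      by_cases hE : ∃ w', acc v w' ∧ SeqCPL acc hwf w' Γ' A'
      · obtain ⟨w0, h0, p0⟩ := hE
        obtain ⟨n, hn⟩ := ih w0 h0 p0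
        exact ⟨n + 1, SN.diaL hm (fun _ => hn)⟩
      · exact ⟨1, SN.diaL hm (fun e => absurd e hE)⟩
  | boxL Γ' A' C' hm _ ih =>
      by_cases hp : ∀ w', acc v w' → SeqCPL acc hwf w' Γ' A'
      · obtain ⟨n, hn⟩ := ih (fun w' h => hp w' h)
        exact ⟨n + 1, SN.boxL hm (fun _ => hn)⟩
      · exact ⟨1, SN.boxL hm (fun q => absurd q hp)⟩




variable {Atom W : Type} [DecidableEq Atom] [DecidableEq W]
  {acc : W → W → Prop} {hwf : WellFounded (Function.swap acc)} {v : W}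

/-- Weakening by a formula at the current world is height-preserving. -/
theorem SN.wk {n : ℕ} {Γ : Ctx Atom W} {C : Form Atom} (X : Form Atom)
    (h : SN acc hwf v n Γ C) : SN acc hwf v n (insert (X, v) Γ) C := by
  induction h with
  | init hm => exact SN.init (Finset.mem_insert_of_mem hm)
  | botL hm => exact SN.botL (Finset.mem_insert_of_mem hm)
  | impR _ ih => exact SN.impR (by rwa [Finset.insert_comm])
  | impL hm _ _ ih1 ih2 =>
      exact SN.impL (Finset.mem_insert_of_mem hm) ih1 (by rwa [Finset.insert_comm])
  | diaR hacc o =>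
      exact SN.diaR hacc ((inert acc hwf _ v (noreach acc hwf hacc) X).1 _ _ o)
  | boxR o =>
      exact SN.boxR (fun w' h => (inert acc hwf _ v (noreach acc hwf h) X).1 _ _ (o w' h))
  | diaL hm _ ih =>
      refine SN.diaL (Finset.mem_insert_of_mem hm) (fun e => ?_)
      obtain ⟨w', h, p⟩ := e
      exact ih ⟨w', h, (inert acc hwf _ v (noreach acc hwf h) X).2 _ _ p⟩
  | boxL hm _ ih =>
      refine SN.boxL (Finset.mem_insert_of_mem hm) (fun hp => ?_)
      exact ih (fun w' h => (inert acc hwf _ v (noreach acc hwf h) X).2 _ _ (hp w' h))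

/-- If `⊥` is derivable on the right, anything is derivable. -/
theorem SIn.botElim {Γ : Ctx Atom W} (C : Form Atom)
    (h : SeqInner acc v (fun w' _ => SeqCPL acc hwf w') Γ (.bot)) :
    SeqInner acc v (fun w' _ => SeqCPL acc hwf w') Γ C := by
  have key : ∀ (Δ : Ctx Atom W) (F : Form Atom),
      SeqInner acc v (fun w' _ => SeqCPL acc hwf w') Δ F → F = .bot →
      SeqInner acc v (fun w' _ => SeqCPL acc hwf w') Δ C := by
    intro Δ F h
    induction h with
    | init Γ' Q => intro hF; cases hF
    | botL Γ' C' hm => intro _; exact SeqInner.botL _ _ hm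
    | impR Γ' A' B' _ _ => intro hF; cases hF
    | impL Γ' A' B' C' hm hp1 _ _ ih2 =>
        intro hF
        exact SeqInner.impL _ _ _ _ hm hp1 (ih2 hF)
    | diaR Γ' A' w' hacc o => intro hF; cases hF
    | boxR Γ' A' o => intro hF; cases hF
    | diaL Γ' A' C' hm _ ih =>
        intro hF
        exact SeqInner.diaL _ _ _ hm (fun w' h p => ih w' h p hF)
    | boxL Γ' A' C' hm _ ih =>
        intro hF
        exact SeqInner.boxL _ _ _ hm (fun hp => ih hp hF)
  exact key Γ _ h rfl

theorem cutSN (A : Form Atom) (k n1 n2 : ℕ) (Γ : Ctx Atom W) (C : Form Atom)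
    (hk : n1 + n2 ≤ k)
    (h1 : SN acc hwf v n1 Γ A)
    (h2 : SN acc hwf v n2 (insert (A, v) Γ) C) :
    SeqInner acc v (fun w' _ => SeqCPL acc hwf w') Γ C := by
  cases h2 with
  | init hm =>
      rcases Finset.mem_insert.mp hm with heq | hmΓ
      · injection heq with e1 e2
        subst e1
        exact h1.toSIn
      · exact SIn.init' acc hwf hmΓ
  | botL hm =>
      rcases Finset.mem_insert.mp hm with heq | hmΓ
      · injection heq with e1 e2
        subst e1
        exact SIn.botElim C h1.toSIn
      · exact SeqInner.botL _ _ hmΓ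
  | @impR m _ A0 B0 p =>
      refine SeqInner.impR _ _ _ ?_
      exact cutSN A (n1 + m) n1 m (insert (A0, v) Γ) B0 le_rfl (SN.wk A0 h1)
        (by rwa [Finset.insert_comm] at p)
  | @impL m _ A0 B0 _ hm p1 p2 =>
      rcases Finset.mem_insert.mp hm with heq | hmΓ
      · injection heq with e1 e2
        subst e1
        cases h1 with
        | botL hmb => exact SeqInner.botL _ _ hmb
        | @impR m1 _ _ _ q =>
            have X1 : SeqInner acc v (fun w' _ => SeqCPL acc hwf w') Γ A0 :=
              cutSN (.imp A0 B0) (m1 + 1 + m) (m1 + 1) m Γ A0 le_rfl (SN.impR q) p1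
            obtain ⟨a, ha⟩ := SIn.toSN X1
            have X2 : SeqInner acc v (fun w' _ => SeqCPL acc hwf w') Γ B0 :=
              cutSN A0 (a + m1) a m1 Γ B0 le_rfl ha q
            have X3 : SeqInner acc v (fun w' _ => SeqCPL acc hwf w') (insert (B0, v) Γ) C :=
              cutSN (.imp A0 B0) (m1 + 1 + m) (m1 + 1) m (insert (B0, v) Γ) C le_rfl
                (SN.wk B0 (SN.impR q)) (by rwa [Finset.insert_comm] at p2)
            obtain ⟨b, hb⟩ := SIn.toSN X2
            obtain ⟨c, hc⟩ := SIn.toSN X3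
            exact cutSN B0 (b + c) b c Γ C le_rfl hb hc
        | @impL m1 _ A' B' _ hm1 q1 q2 =>
            refine SeqInner.impL _ _ _ _ hm1 q1.toSIn ?_
            exact cutSN (.imp A0 B0) (m1 + (m + 1)) m1 (m + 1) (insert (B', v) Γ) C le_rfl q2
              (by have := SN.wk (v := v) B' (SN.impL hm p1 p2); rwa [Finset.insert_comm] at this)
        | @diaL m1 _ A' _ hm1 g =>
            refine SeqInner.diaL _ _ _ hm1 (fun w' h p => ?_)
            exact cutSN (.imp A0 B0) (m1 + (m + 1)) m1 (m + 1) Γ C le_rfl (g ⟨w', h, p⟩)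
              (SN.impL hm p1 p2)
        | @boxL m1 _ A' _ hm1 g =>
            refine SeqInner.boxL _ _ _ hm1 (fun hp => ?_)
            exact cutSN (.imp A0 B0) (m1 + (m + 1)) m1 (m + 1) Γ C le_rfl (g hp)
              (SN.impL hm p1 p2)
      · have X1 : SeqInner acc v (fun w' _ => SeqCPL acc hwf w') Γ A0 :=
          cutSN A (n1 + m) n1 m Γ A0 le_rfl h1 p1
        have X2 : SeqInner acc v (fun w' _ => SeqCPL acc hwf w') (insert (B0, v) Γ) C :=
          cutSN A (n1 + m) n1 m (insert (B0, v) Γ) C le_rfl (SN.wk B0 h1)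
            (by rwa [Finset.insert_comm] at p2)
        exact SeqInner.impL _ _ _ _ hmΓ X1 X2
  | @diaR _ _ A0 w' hacc o =>
      exact SeqInner.diaR _ _ _ hacc ((inert acc hwf w' v (noreach acc hwf hacc) A).2 _ _ o)
  | boxR o =>
      exact SeqInner.boxR _ _
        (fun w' h => (inert acc hwf w' v (noreach acc hwf h) A).2 _ _ (o w' h))
  | @diaL m _ A0 _ hm g =>
      rcases Finset.mem_insert.mp hm with heq | hmΓ
      · injection heq with e1 e2
        subst e1
        cases h1 with
        | botL hmb => exact SeqInner.botL _ _ hmb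
        | @diaR _ _ _ w0 hacc o =>
            have e : ∃ w', acc v w' ∧ SeqCPL acc hwf w' (insert (Form.dia A0, v) Γ) A0 :=
              ⟨w0, hacc, (inert acc hwf w0 v (noreach acc hwf hacc) (.dia A0)).1 _ _ o⟩
            exact cutSN (.dia A0) (n1 + m) n1 m Γ C le_rfl (SN.diaR hacc o) (g e)
        | @impL m1 _ A' B' _ hm1 q1 q2 =>
            refine SeqInner.impL _ _ _ _ hm1 q1.toSIn ?_
            exact cutSN (.dia A0) (m1 + (m + 1)) m1 (m + 1) (insert (B', v) Γ) C le_rfl q2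
              (by have := SN.wk (v := v) B' (SN.diaL hm g); rwa [Finset.insert_comm] at this)
        | @diaL m1 _ A' _ hm1 g1 =>
            refine SeqInner.diaL _ _ _ hm1 (fun w' h p => ?_)
            exact cutSN (.dia A0) (m1 + (m + 1)) m1 (m + 1) Γ C le_rfl (g1 ⟨w', h, p⟩)
              (SN.diaL hm g)
        | @boxL m1 _ A' _ hm1 g1 =>
            refine SeqInner.boxL _ _ _ hm1 (fun hp => ?_)
            exact cutSN (.dia A0) (m1 + (m + 1)) m1 (m + 1) Γ C le_rfl (g1 hp)
              (SN.diaL hm g)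
      · refine SeqInner.diaL _ _ _ hmΓ (fun w' h p => ?_)
        have p' : SeqCPL acc hwf w' (insert (A, v) Γ) A0 :=
          (inert acc hwf w' v (noreach acc hwf h) A).1 _ _ p
        exact cutSN A (n1 + m) n1 m Γ C le_rfl h1 (g ⟨w', h, p'⟩)
  | @boxL m _ A0 _ hm g =>
      rcases Finset.mem_insert.mp hm with heq | hmΓ
      · injection heq with e1 e2
        subst e1
        cases h1 with
        | botL hmb => exact SeqInner.botL _ _ hmb
        | @boxR _ _ _ o =>
            have hp : ∀ w', acc v w' → SeqCPL acc hwf w' (insert (Form.box A0, v) Γ) A0 :=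
              fun w' h => (inert acc hwf w' v (noreach acc hwf h) (.box A0)).1 _ _ (o w' h)
            exact cutSN (.box A0) (n1 + m) n1 m Γ C le_rfl (SN.boxR o) (g hp)
        | @impL m1 _ A' B' _ hm1 q1 q2 =>
            refine SeqInner.impL _ _ _ _ hm1 q1.toSIn ?_
            exact cutSN (.box A0) (m1 + (m + 1)) m1 (m + 1) (insert (B', v) Γ) C le_rfl q2
              (by have := SN.wk (v := v) B' (SN.boxL hm g); rwa [Finset.insert_comm] at this)
        | @diaL m1 _ A' _ hm1 g1 =>
            refine SeqInner.diaL _ _ _ hm1 (fun w' h p => ?_)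
            exact cutSN (.box A0) (m1 + (m + 1)) m1 (m + 1) Γ C le_rfl (g1 ⟨w', h, p⟩)
              (SN.boxL hm g)
        | @boxL m1 _ A' _ hm1 g1 =>
            refine SeqInner.boxL _ _ _ hm1 (fun hp => ?_)
            exact cutSN (.box A0) (m1 + (m + 1)) m1 (m + 1) Γ C le_rfl (g1 hp)
              (SN.boxL hm g)
      · refine SeqInner.boxL _ _ _ hmΓ (fun hp => ?_)
        exact cutSN A (n1 + m) n1 m Γ C le_rfl h1
          (g (fun w' h => (inert acc hwf w' v (noreach acc hwf h) A).1 _ _ (hp w' h)))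
termination_by (sizeOf A, k)
decreasing_by
  all_goals first
    | (apply Prod.Lex.right; omega)
    | (rw [eq_of_heq e1]; apply Prod.Lex.right; omega)
    | (rw [← eq_of_heq e1]; apply Prod.Lex.left;
       simp only [Form.imp.sizeOf_spec]; omega)


end CPLCut

/-- Cut admissibility for the CPL sequent calculus: if `Γ ⟹ A[w]` and
`Γ, A[w] ⟹ C[w]`, then `Γ ⟹ C[w]`. -/
theorem cpl_seq_cut {Atom W : Type} [DecidableEq Atom] [DecidableEq W]
    (acc : W → W → Prop) (hwf : WellFounded (Function.swap acc))
    (w : W) (Γ : Ctx Atom W) (A C : Form Atom)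
    (h1 : SeqCPL acc hwf w Γ A) (h2 : SeqCPL acc hwf w (insert (A, w) Γ) C) :
    SeqCPL acc hwf w Γ C := by
  obtain ⟨n1, hn1⟩ := CPLCut.SIn.toSN ((CPLCut.unfoldCPL acc hwf w Γ A).mp h1)
  obtain ⟨n2, hn2⟩ := CPLCut.SIn.toSN ((CPLCut.unfoldCPL acc hwf w (insert (A, w) Γ) C).mp h2)
  exact (CPLCut.unfoldCPL acc hwf w Γ C).mpr
    (CPLCut.cutSN A (n1 + n2) n1 n2 Γ C le_rfl hn1 hn2)
end

section
/- Equivalence of CPL natural deduction and sequent calculus: for every context Γ, proposition A, and world w, Γ ⊢ A[w] in the CPL natural deduction system if and only if Γ ⟹ A[w] in the CPL sequent calculus. -/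
namespace CPLAux

open Relation

variable {Atom W : Type} [DecidableEq Atom] [DecidableEq W]
variable (acc : W → W → Prop) (hwf : WellFounded (Function.swap acc))
set_option linter.unusedSectionVars false
include hwf

/-- Contexts `Γ`, `Γ'` agree on all judgments at worlds strictly reachable from
`w`, and `Γ`'s judgments at `w` itself are contained in `Γ'`. -/
def Ext (w : W) (Γ Γ' : Ctx Atom W) : Prop :=
  (∀ B : Form Atom, (B, w) ∈ Γ → (B, w) ∈ Γ') ∧
  (∀ p : Form Atom × W, Relation.TransGen acc w p.2 → (p ∈ Γ ↔ p ∈ Γ'))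

lemma notReach_self (u : W) : ¬ Relation.TransGen acc u u := by
  have h : ¬ Relation.TransGen (Function.swap acc) u u :=
    (hwf.transGen).induction (C := fun a => ¬ Relation.TransGen (Function.swap acc) a a) u
      (fun x IH hx => IH x hx hx)
  exact fun hr => h (Relation.transGen_swap.mpr hr)

lemma acc_ne {w w' : W} (h : acc w w') : w ≠ w' := by
  rintro rfl; exact notReach_self acc hwf w (Relation.TransGen.single h)

lemma ext_refl (w : W) (Γ : Ctx Atom W) : Ext acc w Γ Γ :=
  ⟨fun _ h => h, fun _ _ => Iff.rfl⟩

lemma ext_insert {w : W} {Γ Γ' : Ctx Atom W} (p : Form Atom × W) (h : Ext acc w Γ Γ') :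
    Ext acc w (insert p Γ) (insert p Γ') := by
  constructor
  · intro B hB
    rcases Finset.mem_insert.1 hB with h' | h'
    · rw [h']; exact Finset.mem_insert_self _ _
    · exact Finset.mem_insert_of_mem (h.1 B h')
  · intro q hq
    simp only [Finset.mem_insert, h.2 q hq]

lemma ext_acc {w w' : W} (hww' : acc w w') {Γ Γ' : Ctx Atom W} (h : Ext acc w Γ Γ') :
    Ext acc w' Γ Γ' :=
  ⟨fun B hB => (h.2 (B, w') (.single hww')).1 hB,
   fun p hp => h.2 p (.head hww' hp)⟩

lemma ext_acc_symm {w w' : W} (hww' : acc w w') {Γ Γ' : Ctx Atom W} (h : Ext acc w Γ Γ') :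
    Ext acc w' Γ' Γ :=
  ⟨fun B hB => (h.2 (B, w') (.single hww')).2 hB,
   fun p hp => (h.2 p (.head hww' hp)).symm⟩

lemma ext_insert_w (w : W) (B : Form Atom) (Γ : Ctx Atom W) :
    Ext acc w Γ (insert (B, w) Γ) := by
  refine ⟨fun _ h => Finset.mem_insert_of_mem h, fun p hp => ?_⟩
  have hne : p ≠ (B, w) := by
    rintro rfl; exact notReach_self acc hwf w hp
  simp [Finset.mem_insert, hne]

lemma ext_inert_add {w w' : W} (h : acc w w') (F : Form Atom) (Γ : Ctx Atom W) :
    Ext acc w' Γ (insert (F, w) Γ) := by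
  refine ⟨fun _ hB => Finset.mem_insert_of_mem hB, fun p hp => ?_⟩
  have hne : p ≠ (F, w) := by
    rintro rfl; exact notReach_self acc hwf w (Relation.TransGen.head h hp)
  simp [Finset.mem_insert, hne]

lemma ext_inert_rm {w w' : W} (h : acc w w') (F : Form Atom) (Γ : Ctx Atom W) :
    Ext acc w' (insert (F, w) Γ) Γ := by
  constructor
  · intro B hB
    rcases Finset.mem_insert.1 hB with h' | h'
    · exact absurd (congrArg Prod.snd h') (Ne.symm (acc_ne acc hwf h))
    · exact h'
  · intro p hp
    have hne : p ≠ (F, w) := by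
      rintro rfl; exact notReach_self acc hwf w (Relation.TransGen.head h hp)
    simp [Finset.mem_insert, hne]

lemma seq_unfold_eq (w : W) :
    SeqCPL acc hwf w =
      SeqInner (Atom := Atom) acc w (fun w' (_ : acc w w') => SeqCPL acc hwf w') := by
  unfold SeqCPL
  rw [WellFounded.fix_eq]

lemma nd_unfold_eq (w : W) :
    NDCPL acc hwf w =
      NDInner (Atom := Atom) acc w (fun w' (_ : acc w w') => NDCPL acc hwf w') := by
  unfold NDCPL
  rw [WellFounded.fix_eq]

lemma seqI {w : W} {Γ : Ctx Atom W} {C : Form Atom}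
    (h : SeqInner (Atom := Atom) acc w (fun w' (_ : acc w w') => SeqCPL acc hwf w') Γ C) :
    SeqCPL acc hwf w Γ C := by
  rw [seq_unfold_eq]; exact h

lemma seqE {w : W} {Γ : Ctx Atom W} {C : Form Atom}
    (h : SeqCPL acc hwf w Γ C) :
    SeqInner (Atom := Atom) acc w (fun w' (_ : acc w w') => SeqCPL acc hwf w') Γ C := by
  rw [seq_unfold_eq] at h; exact h

/-- Monotonicity of the sequent calculus along `Ext`. -/
lemma seq_mono :
    ∀ (w : W) (Γ : Ctx Atom W) (C : Form Atom), SeqCPL acc hwf w Γ C →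
      ∀ Γ' : Ctx Atom W, Ext acc w Γ Γ' → SeqCPL acc hwf w Γ' C := by
  intro w
  induction w using hwf.induction with
  | _ w IH =>
    intro Γ C h
    rw [seq_unfold_eq] at h
    induction h with
    | init Γ₀ Q =>
      intro Γ' hext
      have hm : (Form.atom Q, w) ∈ Γ' := hext.1 _ (Finset.mem_insert_self _ _)
      apply seqI
      rw [← Finset.insert_eq_self.mpr hm]
      exact .init _ _
    | botL Γ₀ C hm =>
      intro Γ' hext
      exact seqI acc hwf (.botL _ _ (hext.1 _ hm))
    | impR Γ₀ A B _ ih =>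
      intro Γ' hext
      exact seqI acc hwf (.impR _ _ _ (seqE acc hwf (ih _ (ext_insert acc hwf _ hext))))
    | impL Γ₀ A B C hm _ _ ih1 ih2 =>
      intro Γ' hext
      exact seqI acc hwf (.impL _ A B C (hext.1 _ hm)
        (seqE acc hwf (ih1 _ hext))
        (seqE acc hwf (ih2 _ (ext_insert acc hwf _ hext))))
    | diaR Γ₀ A w' h o =>
      intro Γ' hext
      exact seqI acc hwf (.diaR _ _ w' h (IH w' h Γ₀ A o Γ' (ext_acc acc hwf h hext)))
    | boxR Γ₀ A f =>
      intro Γ' hext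
      exact seqI acc hwf (.boxR _ _ (fun w' h =>
        IH w' h Γ₀ A (f w' h) Γ' (ext_acc acc hwf h hext)))
    | diaL Γ₀ A C hm _ ih =>
      intro Γ' hext
      refine seqI acc hwf (.diaL _ A C (hext.1 _ hm) (fun w' h o => ?_))
      exact seqE acc hwf
        (ih w' h (IH w' h Γ' A o Γ₀ (ext_acc_symm acc hwf h hext)) Γ' hext)
    | boxL Γ₀ A C hm _ ih =>
      intro Γ' hext
      refine seqI acc hwf (.boxL _ A C (hext.1 _ hm) (fun f => ?_))
      exact seqE acc hwf
        (ih (fun w' h => IH w' h Γ' A (f w' h) Γ₀ (ext_acc_symm acc hwf h hext)) Γ' hext)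

/-- Weakening by a judgment at the same world. -/
lemma seq_weak_w {w : W} {Γ : Ctx Atom W} {C : Form Atom} (B : Form Atom)
    (h : SeqCPL acc hwf w Γ C) : SeqCPL acc hwf w (insert (B, w) Γ) C :=
  seq_mono acc hwf w Γ C h _ (ext_insert_w acc hwf w B Γ)

/-- Adding an inert (back-world) judgment. -/
lemma seq_add_inert {w w' : W} (h : acc w w') (F : Form Atom) {Γ : Ctx Atom W}
    {A : Form Atom} (d : SeqCPL acc hwf w' Γ A) :
    SeqCPL acc hwf w' (insert (F, w) Γ) A :=
  seq_mono acc hwf w' Γ A d _ (ext_inert_add acc hwf h F Γ)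

/-- Removing an inert (back-world) judgment. -/
lemma seq_rm_inert {w w' : W} (h : acc w w') (F : Form Atom) {Γ : Ctx Atom W}
    {A : Form Atom} (d : SeqCPL acc hwf w' (insert (F, w) Γ) A) :
    SeqCPL acc hwf w' Γ A :=
  seq_mono acc hwf w' _ A d _ (ext_inert_rm acc hwf h F Γ)

/-- Identity expansion. -/
lemma seq_ident : ∀ (A : Form Atom) (w : W) (Γ : Ctx Atom W),
    SeqCPL acc hwf w (insert (A, w) Γ) A := by
  intro A
  induction A with
  | atom Q => intro w Γ; exact seqI acc hwf (.init _ _)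
  | bot => intro w Γ; exact seqI acc hwf (.botL _ _ (Finset.mem_insert_self _ _))
  | imp A B ihA ihB =>
    intro w Γ
    refine seqI acc hwf (.impR _ _ _ ?_)
    refine .impL _ A B B
      (Finset.mem_insert_of_mem (Finset.mem_insert_self _ _)) ?_ ?_
    · exact seqE acc hwf (ihA w _)
    · exact seqE acc hwf (ihB w _)
  | dia A _ =>
    intro w Γ
    exact seqI acc hwf (.diaL _ A _ (Finset.mem_insert_self _ _)
      (fun w' h o => .diaR _ _ w' h o))
  | box A _ =>
    intro w Γ
    exact seqI acc hwf (.boxL _ A _ (Finset.mem_insert_self _ _)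
      (fun f => .boxR _ _ f))

lemma seq_hyp {w : W} {Γ : Ctx Atom W} {A : Form Atom} (h : (A, w) ∈ Γ) :
    SeqCPL acc hwf w Γ A := by
  rw [← Finset.insert_eq_self.mpr h]
  exact seq_ident acc hwf A w Γ

/-- `⊥` on the right entails anything. -/
lemma seq_bot {w : W} {Γ : Ctx Atom W} (h : SeqCPL acc hwf w Γ .bot)
    (C : Form Atom) : SeqCPL acc hwf w Γ C := by
  rw [seq_unfold_eq] at h
  generalize hF : (Form.bot : Form Atom) = F at h
  induction h with
  | init Γ₀ Q => simp at hF
  | botL Γ₀ C₀ hm => exact seqI acc hwf (.botL _ _ hm)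
  | impR Γ₀ A B _ _ => simp at hF
  | impL Γ₀ A B C₀ hm h1 _ _ ih2 =>
    exact seqI acc hwf (.impL _ A B C hm h1 (seqE acc hwf (ih2 hF)))
  | diaR Γ₀ A w' h o => simp at hF
  | boxR Γ₀ A f => simp at hF
  | diaL Γ₀ A C₀ hm _ ih =>
    exact seqI acc hwf (.diaL _ A C hm (fun w' h o => seqE acc hwf (ih w' h o hF)))
  | boxL Γ₀ A C₀ hm _ ih =>
    exact seqI acc hwf (.boxL _ A C hm (fun f => seqE acc hwf (ih f hF)))


/-- What a principal left rule on `F` provides (after the inductive hypotheses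
of the cut have been applied to its minor premises). -/
def LeftData (w : W) (F : Form Atom) (Γ : Ctx Atom W) (C : Form Atom) : Prop :=
  match F with
  | .atom _ => False
  | .bot => True
  | .imp A B => SeqCPL acc hwf w Γ A ∧ SeqCPL acc hwf w (insert (B, w) Γ) C
  | .dia A => ∀ w' (h : acc w w'), SeqCPL acc hwf w' Γ A → SeqCPL acc hwf w Γ C
  | .box A => (∀ w' (_ : acc w w'), SeqCPL acc hwf w' Γ A) → SeqCPL acc hwf w Γ C

/-- Generic part of cut admissibility: induction over the right derivation. -/
lemma cut_main (w : W) (F : Form Atom)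
    (hprin : ∀ Γ C, SeqCPL acc hwf w Γ F → LeftData acc hwf w F Γ C →
      SeqCPL acc hwf w Γ C) :
    ∀ (Γ : Ctx Atom W) (C : Form Atom), SeqCPL acc hwf w Γ F →
      SeqCPL acc hwf w (insert (F, w) Γ) C → SeqCPL acc hwf w Γ C := by
  intro Γ C hD hE
  replace hE := seqE acc hwf hE
  generalize hΔ : insert (F, w) Γ = Δ at hE
  induction hE generalizing Γ with
  | init Γ₀ Q =>
    have hm : (Form.atom Q, w) ∈ insert (F, w) Γ := by
      rw [hΔ]; exact Finset.mem_insert_self _ _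
    rcases Finset.mem_insert.1 hm with heq | hm'
    · have hFa : Form.atom Q = F := congrArg Prod.fst heq
      subst hFa
      exact hD
    · exact seq_hyp acc hwf hm'
  | botL Γ₀ C₀ hm =>
    rw [← hΔ] at hm
    rcases Finset.mem_insert.1 hm with heq | hm'
    · have hFb : (Form.bot : Form Atom) = F := congrArg Prod.fst heq
      subst hFb
      exact hprin Γ C₀ hD trivial
    · exact seqI acc hwf (.botL _ _ hm')
  | impR Γ₀ A B hE1 ih =>
    subst hΔ
    refine seqI acc hwf (.impR _ _ _ (seqE acc hwf ?_))
    exact ih (insert (A, w) Γ) (seq_weak_w acc hwf A hD) (Finset.insert_comm _ _ _)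
  | impL Γ₀ A B C₀ hm hE1 hE2 ih1 ih2 =>
    subst hΔ
    have a := ih1 Γ hD rfl
    have e2 := ih2 (insert (B, w) Γ) (seq_weak_w acc hwf B hD) (Finset.insert_comm _ _ _)
    rcases Finset.mem_insert.1 hm with heq | hm'
    · have hFi : Form.imp A B = F := congrArg Prod.fst heq
      subst hFi
      exact hprin Γ C₀ hD ⟨a, e2⟩
    · exact seqI acc hwf (.impL _ A B C₀ hm' (seqE acc hwf a) (seqE acc hwf e2))
  | diaR Γ₀ A w' h o =>
    subst hΔ
    exact seqI acc hwf (.diaR _ _ w' h (seq_rm_inert acc hwf h F o))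
  | boxR Γ₀ A f =>
    subst hΔ
    exact seqI acc hwf (.boxR _ _ (fun w' h => seq_rm_inert acc hwf h F (f w' h)))
  | diaL Γ₀ A C₀ hm k ih =>
    subst hΔ
    have kk : ∀ w' (h : acc w w'), SeqCPL acc hwf w' Γ A → SeqCPL acc hwf w Γ C₀ :=
      fun w' h o => ih w' h (seq_add_inert acc hwf h F o) Γ hD rfl
    rcases Finset.mem_insert.1 hm with heq | hm'
    · have hFd : Form.dia A = F := congrArg Prod.fst heq
      subst hFd
      exact hprin Γ C₀ hD kk
    · exact seqI acc hwf (.diaL _ A C₀ hm' (fun w' h o => seqE acc hwf (kk w' h o)))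
  | boxL Γ₀ A C₀ hm k ih =>
    subst hΔ
    have kk : (∀ w' (_ : acc w w'), SeqCPL acc hwf w' Γ A) → SeqCPL acc hwf w Γ C₀ :=
      fun f => ih (fun w' h => seq_add_inert acc hwf h F (f w' h)) Γ hD rfl
    rcases Finset.mem_insert.1 hm with heq | hm'
    · have hFb : Form.box A = F := congrArg Prod.fst heq
      subst hFb
      exact hprin Γ C₀ hD kk
    · exact seqI acc hwf (.boxL _ A C₀ hm' (fun f => seqE acc hwf (kk f)))

/-- Principal cut for implication: induction over the left derivation. -/
lemma pImp (w : W) (A B : Form Atom)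
    (cutA : ∀ (Γ : Ctx Atom W) (C : Form Atom), SeqCPL acc hwf w Γ A →
      SeqCPL acc hwf w (insert (A, w) Γ) C → SeqCPL acc hwf w Γ C) :
    ∀ (Γ₀ : Ctx Atom W) (F : Form Atom),
      SeqInner (Atom := Atom) acc w (fun w' (_ : acc w w') => SeqCPL acc hwf w') Γ₀ F →
      Form.imp A B = F →
      ∀ Γ : Ctx Atom W, Ext acc w Γ₀ Γ → SeqCPL acc hwf w Γ A →
        SeqCPL acc hwf w Γ B := by
  intro Γ₀ F hD
  induction hD with
  | init Γ₀ Q => intro hF; simp at hF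
  | botL Γ₀ C₀ hm =>
    intro _ Γ hext _
    exact seqI acc hwf (.botL _ _ (hext.1 _ hm))
  | impR Γ₀ A' B' h1 ih =>
    intro hF Γ hext a
    injection hF with hA hB
    subst hA; subst hB
    exact cutA Γ B a
      (seq_mono acc hwf w _ _ (seqI acc hwf h1) _ (ext_insert acc hwf _ hext))
  | impL Γ₀ A' B' C₀ hm h1 h2 ih1 ih2 =>
    intro hF Γ hext a
    refine seqI acc hwf (.impL _ A' B' B (hext.1 _ hm) ?_ ?_)
    · exact seqE acc hwf (seq_mono acc hwf w _ _ (seqI acc hwf h1) _ hext)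
    · exact seqE acc hwf
        (ih2 hF (insert (B', w) Γ) (ext_insert acc hwf _ hext) (seq_weak_w acc hwf B' a))
  | diaR Γ₀ A' w' h o => intro hF; simp at hF
  | boxR Γ₀ A' f => intro hF; simp at hF
  | diaL Γ₀ A' C₀ hm k ih =>
    intro hF Γ hext a
    refine seqI acc hwf (.diaL _ A' B (hext.1 _ hm) (fun w' h o => ?_))
    exact seqE acc hwf
      (ih w' h (seq_mono acc hwf w' Γ A' o Γ₀ (ext_acc_symm acc hwf h hext)) hF Γ hext a)
  | boxL Γ₀ A' C₀ hm k ih =>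
    intro hF Γ hext a
    refine seqI acc hwf (.boxL _ A' B (hext.1 _ hm) (fun f => ?_))
    exact seqE acc hwf
      (ih (fun w' h => seq_mono acc hwf w' Γ A' (f w' h) Γ₀ (ext_acc_symm acc hwf h hext))
        hF Γ hext a)

/-- Principal cut for possibility. -/
lemma pDia (w : W) (A : Form Atom) :
    ∀ (Γ₀ : Ctx Atom W) (F : Form Atom),
      SeqInner (Atom := Atom) acc w (fun w' (_ : acc w w') => SeqCPL acc hwf w') Γ₀ F →
      Form.dia A = F →
      ∀ (Γ : Ctx Atom W) (C : Form Atom), Ext acc w Γ₀ Γ →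
        (∀ w' (h : acc w w'), SeqCPL acc hwf w' Γ A → SeqCPL acc hwf w Γ C) →
        SeqCPL acc hwf w Γ C := by
  intro Γ₀ F hD
  induction hD with
  | init Γ₀ Q => intro hF; simp at hF
  | botL Γ₀ C₀ hm =>
    intro _ Γ C hext _
    exact seqI acc hwf (.botL _ _ (hext.1 _ hm))
  | impR Γ₀ A' B' h1 ih => intro hF; simp at hF
  | impL Γ₀ A' B' C₀ hm h1 h2 ih1 ih2 =>
    intro hF Γ C hext k
    refine seqI acc hwf (.impL _ A' B' C (hext.1 _ hm) ?_ ?_)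
    · exact seqE acc hwf (seq_mono acc hwf w _ _ (seqI acc hwf h1) _ hext)
    · refine seqE acc hwf (ih2 hF (insert (B', w) Γ) C (ext_insert acc hwf _ hext) ?_)
      exact fun w' h o => seq_weak_w acc hwf B' (k w' h (seq_rm_inert acc hwf h B' o))
  | diaR Γ₀ A' w' h o =>
    intro hF Γ C hext k
    injection hF with hA
    subst hA
    exact k w' h (seq_mono acc hwf w' Γ₀ A o Γ (ext_acc acc hwf h hext))
  | boxR Γ₀ A' f => intro hF; simp at hF
  | diaL Γ₀ A' C₀ hm k₀ ih =>
    intro hF Γ C hext k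
    refine seqI acc hwf (.diaL _ A' C (hext.1 _ hm) (fun w' h o => ?_))
    exact seqE acc hwf
      (ih w' h (seq_mono acc hwf w' Γ A' o Γ₀ (ext_acc_symm acc hwf h hext)) hF Γ C hext k)
  | boxL Γ₀ A' C₀ hm k₀ ih =>
    intro hF Γ C hext k
    refine seqI acc hwf (.boxL _ A' C (hext.1 _ hm) (fun f => ?_))
    exact seqE acc hwf
      (ih (fun w' h => seq_mono acc hwf w' Γ A' (f w' h) Γ₀ (ext_acc_symm acc hwf h hext))
        hF Γ C hext k)

/-- Principal cut for necessity. -/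
lemma pBox (w : W) (A : Form Atom) :
    ∀ (Γ₀ : Ctx Atom W) (F : Form Atom),
      SeqInner (Atom := Atom) acc w (fun w' (_ : acc w w') => SeqCPL acc hwf w') Γ₀ F →
      Form.box A = F →
      ∀ (Γ : Ctx Atom W) (C : Form Atom), Ext acc w Γ₀ Γ →
        ((∀ w' (_ : acc w w'), SeqCPL acc hwf w' Γ A) → SeqCPL acc hwf w Γ C) →
        SeqCPL acc hwf w Γ C := by
  intro Γ₀ F hD
  induction hD with
  | init Γ₀ Q => intro hF; simp at hF
  | botL Γ₀ C₀ hm =>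
    intro _ Γ C hext _
    exact seqI acc hwf (.botL _ _ (hext.1 _ hm))
  | impR Γ₀ A' B' h1 ih => intro hF; simp at hF
  | impL Γ₀ A' B' C₀ hm h1 h2 ih1 ih2 =>
    intro hF Γ C hext k
    refine seqI acc hwf (.impL _ A' B' C (hext.1 _ hm) ?_ ?_)
    · exact seqE acc hwf (seq_mono acc hwf w _ _ (seqI acc hwf h1) _ hext)
    · refine seqE acc hwf (ih2 hF (insert (B', w) Γ) C (ext_insert acc hwf _ hext) ?_)
      exact fun f => seq_weak_w acc hwf B'
        (k (fun w' h => seq_rm_inert acc hwf h B' (f w' h)))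
  | diaR Γ₀ A' w' h o => intro hF; simp at hF
  | boxR Γ₀ A' f =>
    intro hF Γ C hext k
    injection hF with hA
    subst hA
    exact k (fun w' h => seq_mono acc hwf w' Γ₀ A (f w' h) Γ (ext_acc acc hwf h hext))
  | diaL Γ₀ A' C₀ hm k₀ ih =>
    intro hF Γ C hext k
    refine seqI acc hwf (.diaL _ A' C (hext.1 _ hm) (fun w' h o => ?_))
    exact seqE acc hwf
      (ih w' h (seq_mono acc hwf w' Γ A' o Γ₀ (ext_acc_symm acc hwf h hext)) hF Γ C hext k)
  | boxL Γ₀ A' C₀ hm k₀ ih =>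
    intro hF Γ C hext k
    refine seqI acc hwf (.boxL _ A' C (hext.1 _ hm) (fun f => ?_))
    exact seqE acc hwf
      (ih (fun w' h => seq_mono acc hwf w' Γ A' (f w' h) Γ₀ (ext_acc_symm acc hwf h hext))
        hF Γ C hext k)

/-- Cut admissibility for the CPL sequent calculus. -/
lemma seq_cut (w : W) : ∀ (F : Form Atom) (Γ : Ctx Atom W) (C : Form Atom),
    SeqCPL acc hwf w Γ F → SeqCPL acc hwf w (insert (F, w) Γ) C →
    SeqCPL acc hwf w Γ C := by
  intro F
  induction F with
  | atom Q =>
    refine cut_main acc hwf w _ ?_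
    intro Γ C _ hd
    exact False.elim hd
  | bot =>
    refine cut_main acc hwf w _ ?_
    intro Γ C hD _
    exact seq_bot acc hwf hD C
  | imp A B ihA ihB =>
    refine cut_main acc hwf w _ ?_
    intro Γ C hD hd
    obtain ⟨a, e2⟩ := hd
    exact ihB Γ C
      (pImp acc hwf w A B ihA Γ _ (seqE acc hwf hD) rfl Γ (ext_refl acc hwf w Γ) a) e2
  | dia A _ =>
    refine cut_main acc hwf w _ ?_
    intro Γ C hD hd
    exact pDia acc hwf w A Γ _ (seqE acc hwf hD) rfl Γ C (ext_refl acc hwf w Γ) hd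
  | box A _ =>
    refine cut_main acc hwf w _ ?_
    intro Γ C hD hd
    exact pBox acc hwf w A Γ _ (seqE acc hwf hD) rfl Γ C (ext_refl acc hwf w Γ) hd


lemma nd_hyp {w : W} {O : ∀ w', acc w w' → Ctx Atom W → Form Atom → Prop}
    {Γ : Ctx Atom W} {A : Form Atom} (h : (A, w) ∈ Γ) : NDInner acc w O Γ A := by
  rw [← Finset.insert_eq_self.mpr h]
  exact .hyp _ _

/-- Every sequent calculus rule is admissible in natural deduction. -/
lemma seqInner_to_ndInner (w : W)
    (O : ∀ w', acc w w' → Ctx Atom W → Form Atom → Prop) :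
    ∀ (Γ : Ctx Atom W) (A : Form Atom),
      SeqInner acc w O Γ A → NDInner acc w O Γ A := by
  intro Γ A h
  induction h with
  | init Γ Q => exact .hyp _ _
  | botL Γ C hm => exact .botE _ _ (nd_hyp acc hwf hm)
  | impR Γ A B _ ih => exact .impI _ _ _ ih
  | impL Γ A B C hm _ _ ih1 ih2 =>
    exact .impE _ B C (.impI _ B C ih2) (.impE _ A B (nd_hyp acc hwf hm) ih1)
  | diaR Γ A w' h o => exact .diaI _ _ w' h o
  | boxR Γ A f => exact .boxI _ _ f
  | diaL Γ A C hm _ ih => exact .diaE _ A C (nd_hyp acc hwf hm) ih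
  | boxL Γ A C hm _ ih => exact .boxE _ A C (nd_hyp acc hwf hm) ih

/-- Every natural deduction rule is admissible in the sequent calculus
(using identity and cut). -/
lemma ndInner_to_seq (w : W) : ∀ (Γ : Ctx Atom W) (A : Form Atom),
    NDInner (Atom := Atom) acc w (fun w' (_ : acc w w') => SeqCPL acc hwf w') Γ A →
    SeqCPL acc hwf w Γ A := by
  intro Γ A h
  induction h with
  | hyp Γ A => exact seq_ident acc hwf A w Γ
  | botE Γ C _ ih => exact seq_bot acc hwf ih C
  | impI Γ A B _ ih => exact seqI acc hwf (.impR _ _ _ (seqE acc hwf ih))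
  | impE Γ A B _ _ ih1 ih2 =>
    refine seq_cut acc hwf w (.imp A B) Γ B ih1 (seqI acc hwf ?_)
    refine .impL _ A B B (Finset.mem_insert_self _ _) ?_ ?_
    · exact seqE acc hwf (seq_weak_w acc hwf _ ih2)
    · exact seqE acc hwf (seq_ident acc hwf B w _)
  | diaI Γ A w' h o => exact seqI acc hwf (.diaR _ _ w' h o)
  | boxI Γ A f => exact seqI acc hwf (.boxR _ _ f)
  | diaE Γ A C _ _ ih1 ihk =>
    refine seq_cut acc hwf w (.dia A) Γ C ih1 (seqI acc hwf ?_)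
    refine .diaL _ A C (Finset.mem_insert_self _ _) (fun w' h o => ?_)
    exact seqE acc hwf (seq_weak_w acc hwf _ (ihk w' h (seq_rm_inert acc hwf h _ o)))
  | boxE Γ A C _ _ ih1 ihk =>
    refine seq_cut acc hwf w (.box A) Γ C ih1 (seqI acc hwf ?_)
    refine .boxL _ A C (Finset.mem_insert_self _ _) (fun f => ?_)
    exact seqE acc hwf
      (seq_weak_w acc hwf _ (ihk (fun w' h => seq_rm_inert acc hwf h _ (f w' h))))

end CPLAux



/-- Equivalence of CPL natural deduction and sequent calculus: `Γ ⊢ A[w]` if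
and only if `Γ ⟹ A[w]`. -/
theorem cpl_nd_iff_seq {Atom W : Type} [DecidableEq Atom] [DecidableEq W]
    (acc : W → W → Prop) (hwf : WellFounded (Function.swap acc))
    (w : W) (Γ : Ctx Atom W) (A : Form Atom) :
    NDCPL acc hwf w Γ A ↔ SeqCPL acc hwf w Γ A := by
  induction w using hwf.induction generalizing Γ A with
  | _ w IH =>
    have hO : (fun w' (_ : acc w w') => NDCPL acc hwf w'
          : ∀ w', acc w w' → Ctx Atom W → Form Atom → Prop)
        = (fun w' (_ : acc w w') => SeqCPL acc hwf w') := by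
      funext w' h Γ' A'
      exact propext (IH w' h Γ' A')
    constructor
    · intro hnd
      rw [CPLAux.nd_unfold_eq acc hwf w, hO] at hnd
      exact CPLAux.ndInner_to_seq acc hwf w Γ A hnd
    · intro hs
      rw [CPLAux.nd_unfold_eq acc hwf w, hO]
      exact CPLAux.seqInner_to_ndInner acc hwf w _ Γ A (CPLAux.seqE acc hwf hs)
end

section
/- Substitution principle for CPL* natural deduction: if w' ≺* w, Γ ⊢ A[w], and Γ, A[w] ⊢ C[w'] in the CPL* natural deduction system, then Γ ⊢ C[w']. -/
/-- CPL* natural deduction with conclusions at a fixed world `u`, parameterized by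
an oracle `O` giving provability at the worlds transitively accessible from `u`
(which, by converse well-foundedness of the accessibility relation, is defined
before provability at `u`).  The rules are: hyp, ⊥E, ⊃I, ⊃E, ◇I, □I, ◇E, □E.

A de-tethered premise "`Γ ⊢ X[w]` where `u ≺* w`" is rendered as the pair of
hypotheses `here : u = w → ⋯ recursive occurrence at u ⋯` and
`above : ∀ h : u ≺⁺ w, O w h ⋯`; since the accessibility relation is converse
well-founded, `u = w` and `u ≺⁺ w` are mutually exclusive and together cover
`u ≺* w`, so exactly one of the two hypotheses is non-vacuous, and it expresses
precisely `Γ ⊢ X[w]`. -/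
inductive NDSInner {Atom W : Type} [DecidableEq Atom] [DecidableEq W]
    (acc : W → W → Prop) (u : W)
    (O : ∀ w, Relation.TransGen acc u w → Ctx Atom W → Form Atom → Prop) :
    Ctx Atom W → Form Atom → Prop where
  | hyp (Γ : Ctx Atom W) (A : Form Atom) :
      NDSInner acc u O (insert (A, u) Γ) A
  | botE (Γ : Ctx Atom W) (C : Form Atom) (w : W)
      (hw : Relation.ReflTransGen acc u w)
      (here : u = w → NDSInner acc u O Γ .bot)
      (above : ∀ h : Relation.TransGen acc u w, O w h Γ .bot) :
      NDSInner acc u O Γ C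
  | impI (Γ : Ctx Atom W) (A B : Form Atom) :
      NDSInner acc u O (insert (A, u) Γ) B → NDSInner acc u O Γ (.imp A B)
  | impE (Γ : Ctx Atom W) (A B : Form Atom) :
      NDSInner acc u O Γ (.imp A B) → NDSInner acc u O Γ A → NDSInner acc u O Γ B
  | diaI (Γ : Ctx Atom W) (A : Form Atom) (w' : W) (h : acc u w') :
      O w' (Relation.TransGen.single h) Γ A → NDSInner acc u O Γ (.dia A)
  | boxI (Γ : Ctx Atom W) (A : Form Atom) :
      (∀ w' (h : acc u w'), O w' (Relation.TransGen.single h) Γ A) →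
      NDSInner acc u O Γ (.box A)
  | diaE (Γ : Ctx Atom W) (A C : Form Atom) (w : W)
      (hw : Relation.ReflTransGen acc u w)
      (here : u = w → NDSInner acc u O Γ (.dia A))
      (above : ∀ h : Relation.TransGen acc u w, O w h Γ (.dia A))
      (k : ∀ w' (h : acc w w'), O w' (Relation.TransGen.tail' hw h) Γ A →
            NDSInner acc u O Γ C) :
      NDSInner acc u O Γ C
  | boxE (Γ : Ctx Atom W) (A C : Form Atom) (w : W)
      (hw : Relation.ReflTransGen acc u w)
      (here : u = w → NDSInner acc u O Γ (.box A))
      (above : ∀ h : Relation.TransGen acc u w, O w h Γ (.box A))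
      (k : (∀ w' (h : acc w w'), O w' (Relation.TransGen.tail' hw h) Γ A) →
            NDSInner acc u O Γ C) :
      NDSInner acc u O Γ C

/-- The natural deduction judgment `Γ ⊢ A[w]` of de-tethered constructive
provability logic CPL*, defined one world at a time by well-founded recursion
on the converse well-founded accessibility relation `acc` (`≺`). -/
def NDCPLStar {Atom W : Type} [DecidableEq Atom] [DecidableEq W]
    (acc : W → W → Prop) (hwf : WellFounded (Function.swap acc)) :
    W → Ctx Atom W → Form Atom → Prop :=
  have hwf' : WellFounded (fun a b : W => Relation.TransGen acc b a) :=
    Subrelation.wf (fun {a b} h => (Relation.transGen_swap.mpr h :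
      Relation.TransGen (Function.swap acc) a b)) hwf.transGen
  hwf'.fix (C := fun _ => Ctx Atom W → Form Atom → Prop)
    (fun u rec => NDSInner acc u (fun w h => rec w h))

namespace CPLStarAux

variable {Atom W : Type} [DecidableEq Atom] [DecidableEq W]

theorem ndEq (acc : W → W → Prop) (hwf : WellFounded (Function.swap acc)) (v : W) :
    NDCPLStar (Atom := Atom) acc hwf v =
      NDSInner acc v (fun x _ => NDCPLStar acc hwf x) := by
  unfold NDCPLStar
  exact WellFounded.fix_eq _ _ v

theorem mainLemma (acc : W → W → Prop) (hwf : WellFounded (Function.swap acc)) :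
    ∀ v : W,
    (∀ (Γ : Ctx Atom W) (B : Form Atom) (x : W) (C : Form Atom),
        (Relation.TransGen acc v x → NDCPLStar acc hwf x Γ B) →
        NDCPLStar acc hwf v Γ C → NDCPLStar acc hwf v (insert (B, x) Γ) C)
    ∧ (∀ (Γ : Ctx Atom W) (A : Form Atom) (w : W) (C : Form Atom),
        (Relation.ReflTransGen acc v w → NDCPLStar acc hwf w Γ A) →
        NDCPLStar acc hwf v (insert (A, w) Γ) C → NDCPLStar acc hwf v Γ C) := by
  have hwfT : WellFounded (fun a b : W => Relation.TransGen acc b a) :=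
    Subrelation.wf (fun {a b} h => (Relation.transGen_swap.mpr h :
      Relation.TransGen (Function.swap acc) a b)) hwf.transGen
  have irrefl : ∀ y : W, ¬ Relation.TransGen acc y y := fun y =>
    hwfT.induction (C := fun a => ¬ Relation.TransGen acc a a) y (fun x ih hx => ih x hx hx)
  intro v
  induction v using hwfT.induction with
  | _ v IH =>
  -- (b) : weakening at v
  have hb : ∀ (Γ : Ctx Atom W) (B : Form Atom) (x : W) (C : Form Atom),
      (Relation.TransGen acc v x → NDCPLStar acc hwf x Γ B) →
      NDCPLStar acc hwf v Γ C → NDCPLStar acc hwf v (insert (B, x) Γ) C := by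
    intro Γ B x C hB hC
    rw [ndEq] at hC ⊢
    revert hB
    induction hC with
    | hyp Γ₀ B' =>
      intro _
      rw [Finset.insert_comm]
      exact NDSInner.hyp _ _
    | botE Γ₀ C' u' hw here above ih_here =>
      intro hB
      exact NDSInner.botE _ _ u' hw (fun he => ih_here he hB)
        (fun h => (IH u' h).1 Γ₀ B x _ (fun hx => hB (h.trans hx)) (above h))
    | impI Γ₀ A' B' hp ih =>
      intro hB
      have hB' : Relation.TransGen acc v x →
          NDCPLStar acc hwf x (insert (A', v) Γ₀) B := fun ht =>
        (IH x ht).1 Γ₀ A' v B (fun hxv => absurd (ht.trans hxv) (irrefl v)) (hB ht)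
      have h1 := ih hB'
      rw [Finset.insert_comm] at h1
      exact NDSInner.impI _ _ _ h1
    | impE Γ₀ A' B' hp hq ih1 ih2 =>
      intro hB
      exact NDSInner.impE _ _ _ (ih1 hB) (ih2 hB)
    | diaI Γ₀ A' x' h hd =>
      intro hB
      exact NDSInner.diaI _ _ x' h
        ((IH x' (.single h)).1 Γ₀ B x A'
          (fun hx => hB ((Relation.TransGen.single h).trans hx)) hd)
    | boxI Γ₀ A' f =>
      intro hB
      exact NDSInner.boxI _ _ (fun x' h =>
        (IH x' (.single h)).1 Γ₀ B x A'
          (fun hx => hB ((Relation.TransGen.single h).trans hx)) (f x' h))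
    | diaE Γ₀ A' C' u' hw here above k ih_here ih_k =>
      intro hB
      refine NDSInner.diaE _ A' _ u' hw (fun he => ih_here he hB)
        (fun h => (IH u' h).1 Γ₀ B x _ (fun hx => hB (h.trans hx)) (above h))
        (fun x' h d => ?_)
      have hvx : Relation.TransGen acc v x' := Relation.TransGen.tail' hw h
      have d' : NDCPLStar acc hwf x' Γ₀ A' :=
        (IH x' hvx).2 Γ₀ B x A' (fun hr => hB (hvx.trans_left hr)) d
      exact ih_k x' h d' hB
    | boxE Γ₀ A' C' u' hw here above k ih_here ih_k =>
      intro hB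
      refine NDSInner.boxE _ A' _ u' hw (fun he => ih_here he hB)
        (fun h => (IH u' h).1 Γ₀ B x _ (fun hx => hB (h.trans hx)) (above h))
        (fun f => ?_)
      refine ih_k (fun x' h => ?_) hB
      have hvx : Relation.TransGen acc v x' := Relation.TransGen.tail' hw h
      exact (IH x' hvx).2 Γ₀ B x A' (fun hr => hB (hvx.trans_left hr)) (f x' h)
  refine ⟨hb, ?_⟩
  -- (a) : substitution at v
  intro Γ A w C hA hC
  rw [ndEq] at hC ⊢
  suffices H : ∀ (Δ : Ctx Atom W) (C : Form Atom),
      NDSInner acc v (fun x _ => NDCPLStar acc hwf x) Δ C →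
      ∀ Γ : Ctx Atom W, Δ = insert (A, w) Γ →
      (Relation.ReflTransGen acc v w → NDCPLStar acc hwf w Γ A) →
      NDSInner acc v (fun x _ => NDCPLStar acc hwf x) Γ C by
    exact H _ _ hC Γ rfl hA
  clear hC hA Γ C
  intro Δ C hC
  induction hC with
  | hyp Γ₀ B =>
    intro Γ hE hA
    have hmem : (B, v) ∈ insert (A, w) Γ := hE ▸ Finset.mem_insert_self _ _
    rcases Finset.mem_insert.mp hmem with h | h
    · rw [Prod.mk.injEq] at h
      obtain ⟨rfl, rfl⟩ := h
      have := hA Relation.ReflTransGen.refl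
      rw [ndEq] at this
      exact this
    · rw [← Finset.insert_eq_self.mpr h]
      exact NDSInner.hyp _ _
  | botE Γ₀ C' u' hw here above ih_here =>
    intro Γ hE hA
    subst hE
    exact NDSInner.botE _ _ u' hw (fun he => ih_here he Γ rfl hA)
      (fun h => (IH u' h).2 Γ A w _ (fun hr => hA (h.to_reflTransGen.trans hr)) (above h))
  | impI Γ₀ B' B'' hp ih =>
    intro Γ hE hA
    subst hE
    have prem' : Relation.ReflTransGen acc v w →
        NDCPLStar acc hwf w (insert (B', v) Γ) A := by
      intro hr
      rcases Relation.reflTransGen_iff_eq_or_transGen.mp hr with heq | ht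
      · cases heq
        exact hb Γ B' _ A (fun hc => absurd hc (irrefl _)) (hA .refl)
      · exact (IH w ht).1 Γ B' v A (fun hc => absurd (ht.trans hc) (irrefl v)) (hA hr)
    exact NDSInner.impI _ _ _ (ih (insert (B', v) Γ) (Finset.insert_comm _ _ _) prem')
  | impE Γ₀ B' B'' hp hq ih1 ih2 =>
    intro Γ hE hA
    exact NDSInner.impE _ _ _ (ih1 Γ hE hA) (ih2 Γ hE hA)
  | diaI Γ₀ A' x' h hd =>
    intro Γ hE hA
    subst hE
    exact NDSInner.diaI _ _ x' h
      ((IH x' (.single h)).2 Γ A w A'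
        (fun hr => hA (Relation.ReflTransGen.head h hr)) hd)
  | boxI Γ₀ A' f =>
    intro Γ hE hA
    subst hE
    exact NDSInner.boxI _ _ (fun x' h =>
      (IH x' (.single h)).2 Γ A w A'
        (fun hr => hA (Relation.ReflTransGen.head h hr)) (f x' h))
  | diaE Γ₀ A' C' u' hw here above k ih_here ih_k =>
    intro Γ hE hA
    subst hE
    refine NDSInner.diaE _ A' _ u' hw (fun he => ih_here he Γ rfl hA)
      (fun h => (IH u' h).2 Γ A w _ (fun hr => hA (h.to_reflTransGen.trans hr)) (above h))
      (fun x' h d => ?_)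
    have hvx : Relation.TransGen acc v x' := Relation.TransGen.tail' hw h
    have d' : NDCPLStar acc hwf x' (insert (A, w) Γ) A' :=
      (IH x' hvx).1 Γ A w A' (fun hxw => hA (hvx.trans hxw).to_reflTransGen) d
    exact ih_k x' h d' Γ rfl hA
  | boxE Γ₀ A' C' u' hw here above k ih_here ih_k =>
    intro Γ hE hA
    subst hE
    refine NDSInner.boxE _ A' _ u' hw (fun he => ih_here he Γ rfl hA)
      (fun h => (IH u' h).2 Γ A w _ (fun hr => hA (h.to_reflTransGen.trans hr)) (above h))
      (fun f => ?_)
    refine ih_k (fun x' h => ?_) Γ rfl hA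
    have hvx : Relation.TransGen acc v x' := Relation.TransGen.tail' hw h
    exact (IH x' hvx).1 Γ A w A' (fun hxw => hA (hvx.trans hxw).to_reflTransGen) (f x' h)

end CPLStarAux

/-- Substitution principle for CPL* natural deduction: if `w' ≺* w`,
`Γ ⊢ A[w]`, and `Γ, A[w] ⊢ C[w']`, then `Γ ⊢ C[w']`. -/
theorem cplstar_nd_substitution {Atom W : Type} [DecidableEq Atom] [DecidableEq W]
    (acc : W → W → Prop) (hwf : WellFounded (Function.swap acc))
    (w w' : W) (Γ : Ctx Atom W) (A C : Form Atom)
    (hww : Relation.ReflTransGen acc w' w)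
    (h1 : NDCPLStar acc hwf w Γ A)
    (h2 : NDCPLStar acc hwf w' (insert (A, w) Γ) C) :
    NDCPLStar acc hwf w' Γ C := by
  exact (CPLStarAux.mainLemma acc hwf w').2 Γ A w C (fun _ => h1) h2
end

section
/- In the three-world example, the sequent ◇Q[α] ⟹ ⊥[α] is derivable in the CPL sequent calculus. -/
/-- The three worlds α, β, γ of the running example. -/
inductive W3 : Type where
  | α | β | γ
  deriving DecidableEq

/-- Accessibility given exactly by α ≺ β, α ≺ γ, and β ≺ γ. -/
def acc3 : W3 → W3 → Prop := fun a b =>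
  (a = W3.α ∧ b = W3.β) ∨ (a = W3.α ∧ b = W3.γ) ∨ (a = W3.β ∧ b = W3.γ)

/-- `acc3` is converse well-founded. -/
theorem acc3_wf : WellFounded (Function.swap acc3) := by
  have h : Subrelation (Function.swap acc3)
      (InvImage Nat.lt (fun x => match x with | .α => 2 | .β => 1 | .γ => 0)) := by
    intro a b hab
    rcases hab with ⟨h1, h2⟩ | ⟨h1, h2⟩ | ⟨h1, h2⟩ <;> subst h1 <;> subst h2 <;>
      simp [InvImage]
  exact Subrelation.wf h (InvImage.wf _ Nat.lt_wfRel.wf)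

theorem seqCPL_unfold {Atom W : Type} [DecidableEq Atom] [DecidableEq W]
    (acc : W → W → Prop) (hwf : WellFounded (Function.swap acc)) (w : W) :
    SeqCPL (Atom := Atom) acc hwf w =
      SeqInner acc w (fun w' _ => SeqCPL acc hwf w') := by
  exact hwf.fix_eq _ w

theorem no_atom {Atom : Type} [DecidableEq Atom] (A : Atom) (w : W3) (hw : w ≠ W3.α)
    (O : ∀ w', acc3 w w' → Ctx Atom W3 → Form Atom → Prop)
    (Γ : Ctx Atom W3) (hΓ : ∀ X ∈ Γ, X.2 = W3.α) :
    ¬ SeqInner acc3 w O Γ (Form.atom A) := by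
  intro h
  cases h with
  | init Γ' Q' => exact hw (hΓ _ (Finset.mem_insert_self _ _))
  | botL _ _ hm => exact hw (hΓ _ hm)
  | impL _ A' B' C hm _ _ => exact hw (hΓ _ hm)
  | diaL _ A' C hm _ => exact hw (hΓ _ hm)
  | boxL _ A' C hm _ => exact hw (hΓ _ hm)

/-- In the three-world example, the sequent `◇Q[α] ⟹ ⊥[α]` is derivable in the
CPL sequent calculus. -/
theorem cpl_seq_dia_bot {Atom : Type} [DecidableEq Atom] (Q : Atom) :
    SeqCPL acc3 acc3_wf W3.α ({(Form.dia (Form.atom Q), W3.α)} : Ctx Atom W3)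
      Form.bot := by
  rw [seqCPL_unfold]
  apply SeqInner.diaL _ (Form.atom Q) _ (by simp)
  intro w' h hO
  rw [seqCPL_unfold] at hO
  exfalso
  have hw : w' ≠ W3.α := by rcases h with ⟨_, h2⟩ | ⟨_, h2⟩ | ⟨_, h2⟩ <;> subst h2 <;> simp
  exact no_atom Q w' hw _ _ (by simp) hO
end

section
/- Axiom ◇⊥ is valid in CPL*: for every converse well-founded accessibility relation ≺, every context Γ, and every world w, Γ ⊢ (¬◇⊥)[w] (i.e., Γ ⊢ (◇⊥ ⊃ ⊥)[w]) in the CPL* natural deduction system. -/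
theorem NDCPLStar_unfold {Atom W : Type} [DecidableEq Atom] [DecidableEq W]
    (acc : W → W → Prop) (hwf : WellFounded (Function.swap acc)) (u : W) :
    NDCPLStar (Atom := Atom) acc hwf u =
      NDSInner acc u (fun w _ => NDCPLStar acc hwf w) := by
  unfold NDCPLStar
  exact WellFounded.fix_eq _ _ u

/-- Axiom ◇⊥ is valid in CPL*: `Γ ⊢ (¬◇⊥)[w]`, i.e. `Γ ⊢ (◇⊥ ⊃ ⊥)[w]`. -/
theorem cplstar_axiom_dia_bot {Atom W : Type} [DecidableEq Atom] [DecidableEq W]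
    (acc : W → W → Prop) (hwf : WellFounded (Function.swap acc))
    (Γ : Ctx Atom W) (w : W) :
    NDCPLStar acc hwf w Γ (Form.neg (Form.dia Form.bot)) := by
  rw [NDCPLStar_unfold]
  apply NDSInner.impI
  apply NDSInner.diaE (A := Form.bot) (w := w) (hw := Relation.ReflTransGen.refl)
  · intro _
    exact NDSInner.hyp Γ _
  · intro h
    rw [NDCPLStar_unfold]
    exact NDSInner.hyp Γ _
  · intro w' h hb
    apply NDSInner.botE (w := w') (hw := Relation.ReflTransGen.single h)
    · intro e
      subst e
      rw [NDCPLStar_unfold] at hb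
      exact hb
    · intro _
      exact hb
end

section
/- Axiom 4◇ is valid in CPL* under transitivity: if the converse well-founded accessibility relation ≺ is moreover transitive, then for every context Γ, every world w, and every proposition A, Γ ⊢ (◇◇A ⊃ ◇A)[w] in the CPL* natural deduction system. -/
/-- Axiom 4◇ is valid in CPL* under transitivity: if the converse well-founded
accessibility relation is moreover transitive, then `Γ ⊢ (◇◇A ⊃ ◇A)[w]`. -/
theorem cplstar_axiom_four_dia {Atom W : Type} [DecidableEq Atom] [DecidableEq W]
    (acc : W → W → Prop) (hwf : WellFounded (Function.swap acc))
    (htrans : ∀ a b c : W, acc a b → acc b c → acc a c)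
    (Γ : Ctx Atom W) (w : W) (A : Form Atom) :
    NDCPLStar acc hwf w Γ
      (Form.imp (Form.dia (Form.dia A)) (Form.dia A)) := by
  have hwf' : WellFounded (fun a b : W => Relation.TransGen acc b a) :=
    Subrelation.wf (fun {a b} h => (Relation.transGen_swap.mpr h :
      Relation.TransGen (Function.swap acc) a b)) hwf.transGen
  have hirr : ∀ u : W, ¬ Relation.TransGen acc u u := fun u h => hwf'.isIrrefl.irrefl u h
  have key : ∀ u : W, NDCPLStar (Atom := Atom) acc hwf u =
      NDSInner acc u (fun v _ => NDCPLStar acc hwf v) := by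
    intro u
    show hwf'.fix (C := fun _ => Ctx Atom W → Form Atom → Prop)
      (fun u rec => NDSInner acc u (fun w h => rec w h)) u = _
    rw [WellFounded.fix_eq]
    rfl
  rw [key]
  apply NDSInner.impI
  refine NDSInner.diaE _ (Form.dia A) _ w Relation.ReflTransGen.refl
    (fun _ => NDSInner.hyp Γ (Form.dia (Form.dia A)))
    (fun h => absurd h (hirr w)) ?_
  intro w' h1 hdia
  rw [key] at hdia
  refine NDSInner.diaE _ A _ w' (Relation.ReflTransGen.single h1)
    (fun heq => absurd (Relation.TransGen.single (heq ▸ h1)) (hirr w'))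
    (fun _ => by rw [key]; exact hdia) ?_
  intro w'' h2 hA
  exact NDSInner.diaI _ A w'' (htrans w w' w'' h1 h2) hA
end

section
/- The Löb rule is valid in CPL (for any converse well-founded accessibility relation, not necessarily transitive): if A is a proposition such that Γ ⊢ (□A ⊃ A)[w] in the CPL natural deduction system for every context Γ and every world w, then Γ ⊢ A[w] for every context Γ and every world w. -/
/-- The Löb rule is valid in CPL (for any converse well-founded accessibility
relation, not necessarily transitive): if `Γ ⊢ (□A ⊃ A)[w]` for every context
`Γ` and world `w`, then `Γ ⊢ A[w]` for every context `Γ` and world `w`. -/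
theorem cpl_loeb_rule {Atom W : Type} [DecidableEq Atom] [DecidableEq W]
    (acc : W → W → Prop) (hwf : WellFounded (Function.swap acc))
    (A : Form Atom)
    (h : ∀ (Γ : Ctx Atom W) (w : W),
      NDCPL acc hwf w Γ (Form.imp (Form.box A) A)) :
    ∀ (Γ : Ctx Atom W) (w : W), NDCPL acc hwf w Γ A := by
  intro Γ w
  induction w using WellFounded.induction hwf with
  | _ w ih =>
    have hfix := hwf.fix_eq (C := fun _ => Ctx Atom W → Form Atom → Prop)
      (fun w rec => NDInner acc w (fun w' h => rec w' h)) w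
    have hbox : NDCPL acc hwf w Γ (Form.box A) := by
      unfold NDCPL
      rw [hfix]
      exact NDInner.boxI Γ A (fun w' hw => ih w' hw)
    have himp := h Γ w
    unfold NDCPL at himp hbox ⊢
    rw [hfix] at himp hbox ⊢
    exact NDInner.impE Γ (Form.box A) A himp hbox
end

section
/- Two De Morgan laws are valid in CPL*: for every converse well-founded accessibility relation ≺, every context Γ, every world w, and every proposition A, both Γ ⊢ (◇¬A ⊃ ¬□A)[w] and Γ ⊢ (□¬A ⊃ ¬◇A)[w] in the CPL* natural deduction system. -/

theorem wf_irrefl {α : Type*} {r : α → α → Prop} (h : WellFounded r) (a : α) : ¬ r a a :=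
  fun hr => WellFounded.recursion h a (C := fun b => ¬ r b b) (fun b ih hb => ih b hb hb) hr

/-- Two De Morgan laws are valid in CPL*: both `Γ ⊢ (◇¬A ⊃ ¬□A)[w]` and
`Γ ⊢ (□¬A ⊃ ¬◇A)[w]`. -/
theorem cplstar_de_morgan {Atom W : Type} [DecidableEq Atom] [DecidableEq W]
    (acc : W → W → Prop) (hwf : WellFounded (Function.swap acc))
    (Γ : Ctx Atom W) (w : W) (A : Form Atom) :
    NDCPLStar acc hwf w Γ
      (Form.imp (Form.dia (Form.neg A)) (Form.neg (Form.box A))) ∧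
    NDCPLStar acc hwf w Γ
      (Form.imp (Form.box (Form.neg A)) (Form.neg (Form.dia A))) := by
  have irr : ∀ w' : W, ¬ Relation.TransGen acc w' w' := fun w' h =>
    wf_irrefl hwf.transGen w' (Relation.transGen_swap.mpr h)
  rw [NDCPLStar_unfold]
  constructor
  · apply NDSInner.impI
    apply NDSInner.impI
    apply NDSInner.diaE (A := Form.neg A) (w := w) (hw := Relation.ReflTransGen.refl)
    · intro _
      rw [Finset.insert_comm]
      exact NDSInner.hyp _ _
    · intro h
      exact (irr w h).elim
    · intro w' h hA
      apply NDSInner.boxE (A := A) (w := w) (hw := Relation.ReflTransGen.refl)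
      · intro _
        exact NDSInner.hyp _ _
      · intro ht
        exact (irr w ht).elim
      · intro hbox
        apply NDSInner.botE (w := w') (hw := Relation.ReflTransGen.single h)
        · intro heq
          subst heq
          rw [NDCPLStar_unfold] at hA
          have hAw := hbox w h
          rw [NDCPLStar_unfold] at hAw
          exact NDSInner.impE _ _ _ hA hAw
        · intro _
          rw [NDCPLStar_unfold]
          rw [NDCPLStar_unfold] at hA
          have hAw := hbox w' h
          rw [NDCPLStar_unfold] at hAw
          exact NDSInner.impE _ _ _ hA hAw
  · apply NDSInner.impI
    apply NDSInner.impI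
    apply NDSInner.diaE (A := A) (w := w) (hw := Relation.ReflTransGen.refl)
    · intro _
      exact NDSInner.hyp _ _
    · intro h
      exact (irr w h).elim
    · intro w' h hA
      apply NDSInner.boxE (A := Form.neg A) (w := w) (hw := Relation.ReflTransGen.refl)
      · intro _
        rw [Finset.insert_comm]
        exact NDSInner.hyp _ _
      · intro ht
        exact (irr w ht).elim
      · intro hbox
        apply NDSInner.botE (w := w') (hw := Relation.ReflTransGen.single h)
        · intro heq
          subst heq
          rw [NDCPLStar_unfold] at hA
          have hN := hbox w h
          rw [NDCPLStar_unfold] at hN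
          exact NDSInner.impE _ _ _ hN hA
        · intro _
          rw [NDCPLStar_unfold]
          rw [NDCPLStar_unfold] at hA
          have hN := hbox w' h
          rw [NDCPLStar_unfold] at hN
          exact NDSInner.impE _ _ _ hN hA
end

section
/- Conditional De Morgan laws in CPL: if Γ is a context and w a world such that there is no world w' with w ≺ w' and Γ ⟹ ⊥[w'] in the CPL sequent calculus, then for every proposition A both Γ ⟹ (◇¬A ⊃ ¬□A)[w] and Γ ⟹ (□¬A ⊃ ¬◇A)[w] are derivable in the CPL sequent calculus. -/
set_option linter.unusedSectionVars false
set_option linter.unusedVariables false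

section CPL

variable {Atom W : Type} [DecidableEq Atom] [DecidableEq W]
variable {acc : W → W → Prop} {hwf : WellFounded (Function.swap acc)}

/-- The one-step unfolding of `SeqCPL`. -/
abbrev SI (acc : W → W → Prop) (hwf : WellFounded (Function.swap acc))
    (w : W) : Ctx Atom W → Form Atom → Prop :=
  SeqInner acc w (fun w' _ => SeqCPL acc hwf w')

lemma seq_unfold (w : W) :
    SeqCPL (Atom := Atom) acc hwf w = SI acc hwf w :=
  hwf.fix_eq _ w

lemma seq_in {w : W} {Γ : Ctx Atom W} {C : Form Atom}
    (h : SI acc hwf w Γ C) : SeqCPL acc hwf w Γ C := by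
  rw [seq_unfold]; exact h

lemma seq_out {w : W} {Γ : Ctx Atom W} {C : Form Atom}
    (h : SeqCPL acc hwf w Γ C) : SI acc hwf w Γ C := by
  rwa [seq_unfold] at h

lemma initMem {w : W} {O : ∀ w', acc w w' → Ctx Atom W → Form Atom → Prop}
    {Γ : Ctx Atom W} {Q : Atom} (hm : (Form.atom Q, w) ∈ Γ) :
    SeqInner acc w O Γ (.atom Q) := by
  have := SeqInner.init (acc := acc) (w := w) (O := O) Γ Q
  rwa [Finset.insert_eq_self.mpr hm] at this

lemma not_reach (hwf : WellFounded (Function.swap acc)) {w w' u : W}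
    (h : acc w w') (hr : Relation.ReflTransGen acc w' u) : u ≠ w := by
  intro e; subst e
  have t : Relation.TransGen acc u u := Relation.TransGen.head' h hr
  have t' : Relation.TransGen (Function.swap acc) u u := Relation.transGen_swap.mpr t
  exact (hwf.transGen).isIrrefl.irrefl u t'

/-- Agreement: derivability at `w` only depends on judgments at worlds
reachable from `w`. -/
theorem seq_agree : ∀ (w : W) (Γ Δ : Ctx Atom W) (C : Form Atom),
    (∀ p : Form Atom × W, Relation.ReflTransGen acc w p.2 → (p ∈ Γ ↔ p ∈ Δ)) →
    SeqCPL acc hwf w Γ C → SeqCPL acc hwf w Δ C := by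
  intro w
  refine hwf.induction (C := fun w => ∀ (Γ Δ : Ctx Atom W) (C : Form Atom),
    (∀ p : Form Atom × W, Relation.ReflTransGen acc w p.2 → (p ∈ Γ ↔ p ∈ Δ)) →
    SeqCPL acc hwf w Γ C → SeqCPL acc hwf w Δ C) w ?_
  clear w; intro w ihw Γ Δ C hag h
  rw [seq_unfold] at h
  rw [seq_unfold]
  revert Δ
  induction h with
  | init Γ₀ Q =>
      intro Δ hag
      exact initMem ((hag _ Relation.ReflTransGen.refl).mp (Finset.mem_insert_self _ _))
  | botL Γ₀ C hm =>
      intro Δ hag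
      exact .botL _ _ ((hag _ Relation.ReflTransGen.refl).mp hm)
  | impR Γ₀ A B hE ih =>
      intro Δ hag
      refine .impR _ _ _ (ih (insert (A, w) Δ) ?_)
      intro p hp
      simp only [Finset.mem_insert]
      exact or_congr Iff.rfl (hag p hp)
  | impL Γ₀ A B C hm h1 h2 ih1 ih2 =>
      intro Δ hag
      refine .impL _ A B _ ((hag _ Relation.ReflTransGen.refl).mp hm) (ih1 Δ hag) ?_
      refine ih2 (insert (B, w) Δ) ?_
      intro p hp
      simp only [Finset.mem_insert]
      exact or_congr Iff.rfl (hag p hp)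
  | diaR Γ₀ A w' h hO =>
      intro Δ hag
      exact .diaR _ _ w' h (ihw w' h Γ₀ Δ A
        (fun p hp => hag p (Relation.ReflTransGen.head h hp)) hO)
  | boxR Γ₀ A hO =>
      intro Δ hag
      exact .boxR _ _ (fun w' h => ihw w' h Γ₀ Δ A
        (fun p hp => hag p (Relation.ReflTransGen.head h hp)) (hO w' h))
  | diaL Γ₀ A C hm hE ih =>
      intro Δ hag
      refine .diaL _ A _ ((hag _ Relation.ReflTransGen.refl).mp hm) ?_
      intro w' h p
      exact ih w' h (ihw w' h Δ Γ₀ A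
        (fun p hp => (hag p (Relation.ReflTransGen.head h hp)).symm) p) Δ hag
  | boxL Γ₀ A C hm hE ih =>
      intro Δ hag
      refine .boxL _ A _ ((hag _ Relation.ReflTransGen.refl).mp hm) ?_
      intro hall
      exact ih (fun w' h => ihw w' h Δ Γ₀ A
        (fun p hp => (hag p (Relation.ReflTransGen.head h hp)).symm) (hall w' h)) Δ hag

/-- Inserting or removing a judgment at an unreachable world doesn't change
derivability. -/
lemma seq_transfer_insert {w w' : W} (h : acc w w') {X : Form Atom}
    {Γ : Ctx Atom W} {C : Form Atom} :
    SeqCPL acc hwf w' (insert (X, w) Γ) C ↔ SeqCPL acc hwf w' Γ C := by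
  have key : ∀ p : Form Atom × W, Relation.ReflTransGen acc w' p.2 →
      (p ∈ insert (X, w) Γ ↔ p ∈ Γ) := by
    intro p hp
    have hne : p.2 ≠ w := not_reach hwf h hp
    simp only [Finset.mem_insert]
    constructor
    · rintro (rfl | hm)
      · exact absurd rfl hne
      · exact hm
    · exact Or.inr
  constructor
  · exact seq_agree w' _ _ C key
  · exact seq_agree w' _ _ C (fun p hp => (key p hp).symm)

/-- Weakening by a judgment at the current world. -/
theorem seq_wk_insert {w : W} (X : Form Atom) {Γ : Ctx Atom W} {C : Form Atom}
    (h : SeqCPL acc hwf w Γ C) : SeqCPL acc hwf w (insert (X, w) Γ) C := by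
  rw [seq_unfold] at h ⊢
  revert h
  suffices H : ∀ (Γ : Ctx Atom W) (C : Form Atom), SI acc hwf w Γ C →
      ∀ Δ : Ctx Atom W, Γ ⊆ Δ → (∀ p ∈ Δ, p.2 ≠ w → p ∈ Γ) → SI acc hwf w Δ C by
    intro h
    refine H Γ C h _ (Finset.subset_insert _ _) ?_
    intro p hp hne
    rcases Finset.mem_insert.mp hp with rfl | hm
    · exact absurd rfl hne
    · exact hm
  clear Γ C
  intro Γ C h
  induction h with
  | init Γ₀ Q =>
      intro Δ hsub hoff
      exact initMem (hsub (Finset.mem_insert_self _ _))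
  | botL Γ₀ C hm =>
      intro Δ hsub hoff
      exact .botL _ _ (hsub hm)
  | impR Γ₀ A B hE ih =>
      intro Δ hsub hoff
      refine .impR _ _ _ (ih (insert (A, w) Δ) (Finset.insert_subset_insert _ hsub) ?_)
      intro p hp hne
      rcases Finset.mem_insert.mp hp with rfl | hm
      · exact absurd rfl hne
      · exact Finset.mem_insert_of_mem (hoff p hm hne)
  | impL Γ₀ A B C hm h1 h2 ih1 ih2 =>
      intro Δ hsub hoff
      refine .impL _ A B _ (hsub hm) (ih1 Δ hsub hoff)
        (ih2 (insert (B, w) Δ) (Finset.insert_subset_insert _ hsub) ?_)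
      intro p hp hne
      rcases Finset.mem_insert.mp hp with rfl | hm'
      · exact absurd rfl hne
      · exact Finset.mem_insert_of_mem (hoff p hm' hne)
  | diaR Γ₀ A w' h hO =>
      intro Δ hsub hoff
      refine .diaR _ _ w' h (seq_agree w' Γ₀ Δ A ?_ hO)
      intro p hp
      have hne : p.2 ≠ w := not_reach hwf h hp
      exact ⟨fun hg => hsub hg, fun hd => hoff p hd hne⟩
  | boxR Γ₀ A hO =>
      intro Δ hsub hoff
      refine .boxR _ _ (fun w' h => seq_agree w' Γ₀ Δ A ?_ (hO w' h))
      intro p hp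
      have hne : p.2 ≠ w := not_reach hwf h hp
      exact ⟨fun hg => hsub hg, fun hd => hoff p hd hne⟩
  | diaL Γ₀ A C hm hE ih =>
      intro Δ hsub hoff
      refine .diaL _ A _ (hsub hm) ?_
      intro w' h p
      refine ih w' h (seq_agree w' Δ Γ₀ A ?_ p) Δ hsub hoff
      intro p hp
      have hne : p.2 ≠ w := not_reach hwf h hp
      exact ⟨fun hd => hoff p hd hne, fun hg => hsub hg⟩
  | boxL Γ₀ A C hm hE ih =>
      intro Δ hsub hoff
      refine .boxL _ A _ (hsub hm) ?_
      intro hall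
      refine ih (fun w' h => seq_agree w' Δ Γ₀ A ?_ (hall w' h)) Δ hsub hoff
      intro p hp
      have hne : p.2 ≠ w := not_reach hwf h hp
      exact ⟨fun hd => hoff p hd hne, fun hg => hsub hg⟩


/-- `⊥` on the right proves anything. -/
theorem seq_bot_any {w : W} {O : ∀ w', acc w w' → Ctx Atom W → Form Atom → Prop}
    {Γ : Ctx Atom W} (C : Form Atom) {B : Form Atom}
    (h : SeqInner acc w O Γ B) (hB : B = Form.bot) : SeqInner acc w O Γ C := by
  induction h with
  | init Γ₀ Q => exact nomatch hB
  | botL Γ₀ C₀ hm => exact .botL _ _ hm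
  | impR Γ₀ A B hE ih => exact nomatch hB
  | impL Γ₀ A B C₀ hm h1 h2 ih1 ih2 => exact .impL _ A B _ hm h1 (ih2 hB)
  | diaR Γ₀ A w' h hO => exact nomatch hB
  | boxR Γ₀ A hO => exact nomatch hB
  | diaL Γ₀ A C₀ hm hE ih => exact .diaL _ A _ hm (fun w' h p => ih w' h p hB)
  | boxL Γ₀ A C₀ hm hE ih => exact .boxL _ A _ hm (fun hall => ih hall hB)

/-- Inversion of the `⊃R` rule. -/
theorem seq_impR_inv {w : W} {Γ : Ctx Atom W} {A B : Form Atom}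
    (h : SeqCPL acc hwf w Γ (.imp A B)) :
    SeqCPL acc hwf w (insert (A, w) Γ) B := by
  rw [seq_unfold] at h
  rw [seq_unfold]
  suffices H : ∀ (Γ' : Ctx Atom W) (X : Form Atom), SI acc hwf w Γ' X →
      ∀ A B : Form Atom, X = .imp A B → SI acc hwf w (insert (A, w) Γ') B from
    H Γ _ h A B rfl
  clear h Γ A B
  intro Γ' X h
  induction h with
  | init Γ₀ Q => exact fun A B he => nomatch he
  | botL Γ₀ C hm => exact fun A B he => .botL _ _ (Finset.mem_insert_of_mem hm)
  | impR Γ₀ A' B' hE ih =>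
      intro A B he
      injection he with h1 h2
      subst h1; subst h2
      exact hE
  | impL Γ₀ X Y C hm h1 h2 ih1 ih2 =>
      intro A B he; subst he
      refine .impL _ X Y _ (Finset.mem_insert_of_mem hm)
        (seq_out (seq_wk_insert A (seq_in h1))) ?_
      have := ih2 A B rfl
      rwa [Finset.insert_comm] at this
  | diaR Γ₀ Z w' h hO => exact fun A B he => nomatch he
  | boxR Γ₀ Z hO => exact fun A B he => nomatch he
  | diaL Γ₀ Z C hm hE ih =>
      intro A B he; subst he
      refine .diaL _ Z _ (Finset.mem_insert_of_mem hm) ?_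
      intro w' h p
      exact ih w' h ((seq_transfer_insert h).mp p) A B rfl
  | boxL Γ₀ Z C hm hE ih =>
      intro A B he; subst he
      refine .boxL _ Z _ (Finset.mem_insert_of_mem hm) ?_
      intro hall
      exact ih (fun w' h => (seq_transfer_insert h).mp (hall w' h)) A B rfl

/-- Principal cut for `◇`. -/
theorem seq_diaCut {w : W} {X C : Form Atom} :
    ∀ Γ : Ctx Atom W, SeqCPL acc hwf w Γ (.dia X) →
    (∀ w' (h : acc w w'), SeqCPL acc hwf w' Γ X → SeqCPL acc hwf w Γ C) →
    SeqCPL acc hwf w Γ C := by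
  suffices H : ∀ (Γ : Ctx Atom W) (Y : Form Atom), SI acc hwf w Γ Y → Y = .dia X →
      (∀ w' (h : acc w w'), SeqCPL acc hwf w' Γ X → SeqCPL acc hwf w Γ C) →
      SI acc hwf w Γ C from
    fun Γ hD f => seq_in (H Γ _ (seq_out hD) rfl f)
  intro Γ Y h
  induction h with
  | init Γ₀ Q => exact fun he => nomatch he
  | botL Γ₀ C₀ hm => exact fun _ _ => .botL _ _ hm
  | impR Γ₀ A B hE ih => exact fun he => nomatch he
  | impL Γ₀ U V C₀ hm h1 h2 ih1 ih2 =>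
      intro he f; subst he
      refine .impL _ U V _ hm h1 (ih2 rfl ?_)
      intro w' h p
      exact seq_wk_insert V (f w' h ((seq_transfer_insert h).mp p))
  | diaR Γ₀ Z w' h hO =>
      intro he f
      injection he with hz; subst hz
      exact seq_out (f w' h hO)
  | boxR Γ₀ Z hO => exact fun he => nomatch he
  | diaL Γ₀ Z C₀ hm hE ih =>
      intro he f; subst he
      exact .diaL _ Z _ hm (fun w' h p => ih w' h p rfl f)
  | boxL Γ₀ Z C₀ hm hE ih =>
      intro he f; subst he
      exact .boxL _ Z _ hm (fun hall => ih hall rfl f)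

/-- Principal cut for `□`. -/
theorem seq_boxCut {w : W} {X C : Form Atom} :
    ∀ Γ : Ctx Atom W, SeqCPL acc hwf w Γ (.box X) →
    ((∀ w' (h : acc w w'), SeqCPL acc hwf w' Γ X) → SeqCPL acc hwf w Γ C) →
    SeqCPL acc hwf w Γ C := by
  suffices H : ∀ (Γ : Ctx Atom W) (Y : Form Atom), SI acc hwf w Γ Y → Y = .box X →
      ((∀ w' (h : acc w w'), SeqCPL acc hwf w' Γ X) → SeqCPL acc hwf w Γ C) →
      SI acc hwf w Γ C from
    fun Γ hD f => seq_in (H Γ _ (seq_out hD) rfl f)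
  intro Γ Y h
  induction h with
  | init Γ₀ Q => exact fun he => nomatch he
  | botL Γ₀ C₀ hm => exact fun _ _ => .botL _ _ hm
  | impR Γ₀ A B hE ih => exact fun he => nomatch he
  | impL Γ₀ U V C₀ hm h1 h2 ih1 ih2 =>
      intro he f; subst he
      refine .impL _ U V _ hm h1 (ih2 rfl ?_)
      intro hall
      exact seq_wk_insert V (f (fun w' h => (seq_transfer_insert h).mp (hall w' h)))
  | diaR Γ₀ Z w' h hO => exact fun he => nomatch he
  | boxR Γ₀ Z hO =>
      intro he f
      injection he with hz; subst hz
      exact seq_out (f hO)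
  | diaL Γ₀ Z C₀ hm hE ih =>
      intro he f; subst he
      exact .diaL _ Z _ hm (fun w' h p => ih w' h p rfl f)
  | boxL Γ₀ Z C₀ hm hE ih =>
      intro he f; subst he
      exact .boxL _ Z _ hm (fun hall => ih hall rfl f)

/-- Auxiliary cut lemma: cut for formula `A`, given cut for the immediate
subformulas when `A` is an implication. -/
theorem seq_cut_aux (A : Form Atom)
    (ihsub : ∀ X Y : Form Atom, A = .imp X Y →
      (∀ (w : W) (Γ : Ctx Atom W) (C : Form Atom), SeqCPL acc hwf w Γ X →
        SeqCPL acc hwf w (insert (X, w) Γ) C → SeqCPL acc hwf w Γ C) ∧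
      (∀ (w : W) (Γ : Ctx Atom W) (C : Form Atom), SeqCPL acc hwf w Γ Y →
        SeqCPL acc hwf w (insert (Y, w) Γ) C → SeqCPL acc hwf w Γ C)) :
    ∀ (w : W) (Γ : Ctx Atom W) (C : Form Atom), SeqCPL acc hwf w Γ A →
      SeqCPL acc hwf w (insert (A, w) Γ) C → SeqCPL acc hwf w Γ C := by
  intro w Γ C hD hE
  suffices H : ∀ (Δ : Ctx Atom W) (C : Form Atom), SI acc hwf w Δ C →
      ∀ Γ : Ctx Atom W, Δ = insert (A, w) Γ → SeqCPL acc hwf w Γ A →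
      SI acc hwf w Γ C from
    seq_in (H _ C (seq_out hE) Γ rfl hD)
  clear hD hE Γ C
  intro Δ C h
  induction h with
  | init Γ₀ Q =>
      intro Γ heq hD
      have hm : (Form.atom Q, w) ∈ insert (A, w) Γ := heq ▸ Finset.mem_insert_self _ _
      rcases Finset.mem_insert.mp hm with he | hm'
      · injection he with h1 h2
        subst h1
        exact seq_out hD
      · exact initMem hm'
  | botL Γ₀ C₀ hm =>
      intro Γ heq hD
      have hm' : (Form.bot, w) ∈ insert (A, w) Γ := heq ▸ hm
      rcases Finset.mem_insert.mp hm' with he | hm2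
      · injection he with h1 h2
        subst h1
        exact seq_bot_any _ (seq_out hD) rfl
      · exact .botL _ _ hm2
  | impR Γ₀ X Y hE ih =>
      intro Γ heq hD; subst heq
      refine .impR _ X Y (ih (insert (X, w) Γ) (Finset.insert_comm _ _ _)
        (seq_wk_insert X hD))
  | impL Γ₀ X Y C₀ hm h1 h2 ih1 ih2 =>
      intro Γ heq hD; subst heq
      have S1 : SI acc hwf w Γ X := ih1 Γ rfl hD
      have S2 : SI acc hwf w (insert (Y, w) Γ) C₀ :=
        ih2 (insert (Y, w) Γ) (Finset.insert_comm _ _ _) (seq_wk_insert Y hD)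
      rcases Finset.mem_insert.mp hm with he | hm'
      · injection he with h1' h2'
        subst h1'
        obtain ⟨cutX, cutY⟩ := ihsub X Y rfl
        have hInv : SeqCPL acc hwf w (insert (X, w) Γ) Y := seq_impR_inv hD
        have hY : SeqCPL acc hwf w Γ Y := cutX w Γ Y (seq_in S1) hInv
        exact seq_out (cutY w Γ C₀ hY (seq_in S2))
      · exact .impL _ X Y _ hm' S1 S2
  | diaR Γ₀ Z w' h hO =>
      intro Γ heq hD; subst heq
      exact .diaR _ _ w' h ((seq_transfer_insert h).mp hO)
  | boxR Γ₀ Z hO =>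
      intro Γ heq hD; subst heq
      exact .boxR _ _ (fun w' h => (seq_transfer_insert h).mp (hO w' h))
  | diaL Γ₀ Z C₀ hm hE ih =>
      intro Γ heq hD; subst heq
      have f : ∀ w' (h : acc w w'), SeqCPL acc hwf w' Γ Z → SeqCPL acc hwf w Γ C₀ :=
        fun w' h p => seq_in (ih w' h ((seq_transfer_insert h).mpr p) Γ rfl hD)
      rcases Finset.mem_insert.mp hm with he | hm'
      · injection he with h1 h2
        subst h1
        exact seq_out (seq_diaCut Γ hD f)
      · exact .diaL _ Z _ hm' (fun w' h p => seq_out (f w' h p))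
  | boxL Γ₀ Z C₀ hm hE ih =>
      intro Γ heq hD; subst heq
      have f : (∀ w' (h : acc w w'), SeqCPL acc hwf w' Γ Z) → SeqCPL acc hwf w Γ C₀ :=
        fun hall => seq_in
          (ih (fun w' h => (seq_transfer_insert h).mpr (hall w' h)) Γ rfl hD)
      rcases Finset.mem_insert.mp hm with he | hm'
      · injection he with h1 h2
        subst h1
        exact seq_out (seq_boxCut Γ hD f)
      · exact .boxL _ Z _ hm' (fun hall => seq_out (f hall))

/-- Cut admissibility. -/
theorem seq_cut : ∀ (A : Form Atom) (w : W) (Γ : Ctx Atom W) (C : Form Atom),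
    SeqCPL acc hwf w Γ A → SeqCPL acc hwf w (insert (A, w) Γ) C →
    SeqCPL acc hwf w Γ C := by
  intro A
  induction A with
  | atom Q => exact seq_cut_aux _ (fun X Y he => nomatch he)
  | bot => exact seq_cut_aux _ (fun X Y he => nomatch he)
  | imp X Y ihX ihY =>
      refine seq_cut_aux _ (fun U V he => ?_)
      injection he with h1 h2
      subst h1; subst h2
      exact ⟨ihX, ihY⟩
  | dia Z ih => exact seq_cut_aux _ (fun X Y he => nomatch he)
  | box Z ih => exact seq_cut_aux _ (fun X Y he => nomatch he)

end CPL

/-- Conditional De Morgan laws in CPL: if there is no world `w'` with `w ≺ w'`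
and `Γ ⟹ ⊥[w']`, then for every proposition `A` both
`Γ ⟹ (◇¬A ⊃ ¬□A)[w]` and `Γ ⟹ (□¬A ⊃ ¬◇A)[w]` are derivable. -/
theorem cpl_conditional_de_morgan {Atom W : Type} [DecidableEq Atom] [DecidableEq W]
    (acc : W → W → Prop) (hwf : WellFounded (Function.swap acc))
    (Γ : Ctx Atom W) (w : W)
    (hcons : ¬ ∃ w', acc w w' ∧ SeqCPL acc hwf w' Γ Form.bot) :
    ∀ A : Form Atom,
      SeqCPL acc hwf w Γ
        (Form.imp (Form.dia (Form.neg A)) (Form.neg (Form.box A))) ∧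
      SeqCPL acc hwf w Γ
        (Form.imp (Form.box (Form.neg A)) (Form.neg (Form.dia A))) := by
  intro A
  constructor
  · apply seq_in
    refine SeqInner.impR _ _ _ (SeqInner.impR _ _ _ ?_)
    refine SeqInner.diaL _ (Form.neg A) _ ?_ ?_
    · exact Finset.mem_insert_of_mem (Finset.mem_insert_self _ _)
    intro w' h hnA
    refine SeqInner.boxL _ A _ (Finset.mem_insert_self _ _) ?_
    intro hall
    have hA := hall w' h
    have hbot : SeqCPL acc hwf w'
        (insert (Form.box A, w) (insert (Form.dia (Form.neg A), w) Γ)) Form.bot :=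
      seq_cut A w' _ Form.bot hA (seq_impR_inv hnA)
    have hbot' : SeqCPL acc hwf w' Γ Form.bot :=
      (seq_transfer_insert h).mp ((seq_transfer_insert h).mp hbot)
    exact (hcons ⟨w', h, hbot'⟩).elim
  · apply seq_in
    refine SeqInner.impR _ _ _ (SeqInner.impR _ _ _ ?_)
    refine SeqInner.diaL _ A _ (Finset.mem_insert_self _ _) ?_
    intro w' h hA
    refine SeqInner.boxL _ (Form.neg A) _
      (Finset.mem_insert_of_mem (Finset.mem_insert_self _ _)) ?_
    intro hall
    have hnA := hall w' h
    have hbot : SeqCPL acc hwf w'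
        (insert (Form.dia A, w) (insert (Form.box (Form.neg A), w) Γ)) Form.bot :=
      seq_cut A w' _ Form.bot hA (seq_impR_inv hnA)
    have hbot' : SeqCPL acc hwf w' Γ Form.bot :=
      (seq_transfer_insert h).mp ((seq_transfer_insert h).mp hbot)
    exact (hcons ⟨w', h, hbot'⟩).elim
end
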